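/- arXiv:2501.12480 — 6 statements merged into one kernel-verified Lean document; each statement's English description precedes it below -/
import Mathlib

section
/- (Upper large-deviation bound for self-normalized sums) Let p > 1 and let X satisfy P(X > 0) > 0. Then for every z with z > 0 and z > z*: limsup_{n→∞} n^{−1}·ln P(A_n(z)) ≤ J_z := sup_{c ≥ 0} inf_{t ≥ 0} ln E exp{t(cX − (z/p)(|X|^p + (p−1)c^{p/(p−1)}))}, the inequality being in the extended real line. -/
/-!
On `A_n(z)` we have `S_n ≥ z n ρ^{1/p}` with `ρ = T_n / n`. For `c ≥ 0` this bounds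
`∑ tilt_c(X_j) = c S_n - (z/p) (T_n + (p-1) n c^{p/(p-1)})` from below by `n z` times the
defect of Young's inequality `c ρ^{1/p} ≤ ρ/p + (p-1)/p c^{p/(p-1)}`, which vanishes at
`ρ = c^{p/(p-1)}`. So for `ρ` near `c^{p/(p-1)}` the event lies in `{∑ t tilt_c(X_j) ≥ -δ n}`,
and a Chernoff bound with a tilt `t` for which `E exp(t tilt_c(X)) ≤ e^L`, `L > J_z`, bounds its
probability by `e^{(L + δ) n}`. Finitely many `c` cover `ρ ∈ [0, B]` by compactness. For
`ρ ≥ B` the event forces the truncations `min (X_j⁺ / u, 1)` to have average at least a fixed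
`β > 0`, while their mean tends to `0` as `u = u(B) → ∞`; this has probability at most
`e^{-L n}` for any given `L`.
-/

open MeasureTheory ProbabilityTheory Real Filter Set
open scoped ENNReal NNReal Topology Classical

noncomputable section

namespace SelfNormalized

def tilt (z p c x : ℝ) : ℝ :=
  c * x - z / p * (|x| ^ p + (p - 1) * c ^ (p / (p - 1)))

/-- By Young's inequality this is `≤ 0`, with equality at `r = c ^ (p / (p - 1))`; only the
equality case is needed. -/
def youngGap (p c r : ℝ) : ℝ :=
  c * r ^ (1 / p) - r / p - (p - 1) / p * c ^ (p / (p - 1))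

def trunc (u x : ℝ) : ℝ := min (max x 0 / u) 1

lemma youngGap_rpow_self {p r : ℝ} (hp : 1 < p) (hr : 0 ≤ r) :
    youngGap p (r ^ ((p - 1) / p)) r = 0 := by
  have hp0 : p ≠ 0 := by positivity
  have hp1 : p - 1 ≠ 0 := sub_ne_zero.2 hp.ne'
  have hsum : (p - 1) / p + 1 / p = 1 := by field_simp; ring
  have h₁ : r ^ ((p - 1) / p) * r ^ (1 / p) = r := by
    rw [← rpow_add' hr (by rw [hsum]; exact one_ne_zero), hsum, rpow_one]
  have h₂ : (r ^ ((p - 1) / p)) ^ (p / (p - 1)) = r := by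
    rw [← rpow_mul hr, show (p - 1) / p * (p / (p - 1)) = 1 by field_simp, rpow_one]
  rw [youngGap, h₁, h₂]
  field_simp
  ring

lemma continuous_youngGap {p : ℝ} (hp : 0 < p) (c : ℝ) : Continuous (youngGap p c) := by
  have := continuous_rpow_const (one_div_nonneg.2 hp.le)
  unfold youngGap
  fun_prop

lemma exists_finset_youngGap_cover {p δ : ℝ} (hp : 1 < p) (a : {c : ℝ // 0 ≤ c} → ℝ)
    (hδ : 0 < δ) (B : ℝ) :
    ∃ C : Finset {c : ℝ // 0 ≤ c}, Icc 0 B ⊆ ⋃ c ∈ C, {r | -δ < a c * youngGap p c r} := by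
  refine isCompact_Icc.elim_finite_subcover _
    (fun c => isOpen_lt continuous_const
      (continuous_const.mul (continuous_youngGap (by linarith) c)))
    fun r hr => mem_iUnion.2 ⟨⟨r ^ ((p - 1) / p), rpow_nonneg hr.1 _⟩, ?_⟩
  show -δ < _ * youngGap p (r ^ ((p - 1) / p)) r
  rw [youngGap_rpow_self hp hr.1, mul_zero]
  exact neg_lt_zero.2 hδ

lemma rpow_one_sub_one_div_mul_rpow_one_div {n T : ℝ} (p : ℝ) (hn : 0 < n) (hT : 0 ≤ T) :
    n ^ (1 - 1 / p) * T ^ (1 / p) = n * (T / n) ^ (1 / p) := by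
  rw [rpow_sub hn, rpow_one, div_rpow hT hn.le]
  field_simp

lemma sum_tilt_ge {p z c : ℝ} {n : ℕ} {x : ℕ → ℝ} (hc : 0 ≤ c) (hn : 0 < n)
    (hx : z * (n : ℝ) ^ (1 - 1 / p) * (∑ j ∈ Finset.range n, |x j| ^ p) ^ (1 / p)
      ≤ ∑ j ∈ Finset.range n, x j) :
    n * (z * youngGap p c ((∑ j ∈ Finset.range n, |x j| ^ p) / n))
      ≤ ∑ j ∈ Finset.range n, tilt z p c (x j) := by
  set T := ∑ j ∈ Finset.range n, |x j| ^ p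
  have hn' : (0 : ℝ) < n := Nat.cast_pos.2 hn
  have hT : 0 ≤ T := Finset.sum_nonneg fun j _ => rpow_nonneg (abs_nonneg _) _
  have hsum : ∑ j ∈ Finset.range n, tilt z p c (x j)
      = c * ∑ j ∈ Finset.range n, x j - z / p * T
        - n * (z / p * ((p - 1) * c ^ (p / (p - 1)))) := by
    simp only [tilt, mul_add, Finset.sum_sub_distrib, Finset.sum_add_distrib, ← Finset.mul_sum,
      Finset.sum_const, Finset.card_range, nsmul_eq_mul, T]
    ring
  rw [mul_assoc, rpow_one_sub_one_div_mul_rpow_one_div p hn' hT] at hx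
  have hcx := mul_le_mul_of_nonneg_left hx hc
  have hT' : z / p * T = n * z * (T / n) / p := by field_simp
  rw [hsum, youngGap]
  linear_combination hcx + hT'

lemma le_min_add_rpow {p u : ℝ} (hp : 1 ≤ p) (hu : 0 < u) (x : ℝ) :
    x ≤ min (max x 0) u + u ^ (1 - p) * |x| ^ p := by
  have hrest : 0 ≤ u ^ (1 - p) * |x| ^ p := by positivity
  rcases le_or_gt x u with hxu | hux
  · have : x ≤ min (max x 0) u := le_min (le_max_left _ _) hxu
    linarith
  · have hx : 0 < x := hu.trans hux
    have hpow : x ≤ u ^ (1 - p) * |x| ^ p := by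
      have h1 : 1 ≤ (x / u) ^ (p - 1) := one_le_rpow ((one_le_div hu).2 hux.le) (by linarith)
      calc x ≤ x * (x / u) ^ (p - 1) := le_mul_of_one_le_right hx.le h1
        _ = u ^ (1 - p) * |x| ^ p := by
          rw [abs_of_pos hx, div_rpow hx.le hu.le, rpow_sub_one hx.ne',
            show 1 - p = -(p - 1) by ring, rpow_neg hu.le]
          field_simp
    have : min (max x 0) u = u := min_eq_right (by simp [hux.le])
    linarith

lemma min_le_mul_trunc {u v : ℝ} (hv : 0 < v) (hvu : v ≤ u) (x : ℝ) :
    min (max x 0) u ≤ u * trunc v x := by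
  have hu : 0 < u := hv.trans_le hvu
  calc min (max x 0) u = u * min (max x 0 / u) 1 := by
        rw [mul_min_of_nonneg _ _ hu.le, mul_div_cancel₀ _ hu.ne', mul_one]
    _ ≤ u * trunc v x := by
        unfold trunc
        gcongr

/-- Split each `x j` at the level `u = κ (T / n) ^ (1 / p)`: the excess above `u` is at most
`u ^ (1 - p) * |x j| ^ p`, and these sum to at most half of the lower bound
`z n (T / n) ^ (1 / p)` of `∑ x j`. -/
lemma sum_trunc_ge {p z κ b : ℝ} {n : ℕ} {x : ℕ → ℝ} (hp : 1 < p) (hκ : 0 < κ)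
    (hκz : κ ^ (1 - p) ≤ z / 2) (hb : 0 < b) (hn : 0 < n)
    (hx : z * (n : ℝ) ^ (1 - 1 / p) * (∑ j ∈ Finset.range n, |x j| ^ p) ^ (1 / p)
      ≤ ∑ j ∈ Finset.range n, x j)
    (hT : b ^ p ≤ (∑ j ∈ Finset.range n, |x j| ^ p) / n) :
    z / (2 * κ) * n ≤ ∑ j ∈ Finset.range n, trunc (κ * b) (x j) := by
  set T := ∑ j ∈ Finset.range n, |x j| ^ p
  set r := (T / n) ^ (1 / p) with hr_def
  have hp0 : p ≠ 0 := by positivity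
  have hn' : (0 : ℝ) < n := Nat.cast_pos.2 hn
  have hT0 : 0 ≤ T := Finset.sum_nonneg fun j _ => rpow_nonneg (abs_nonneg _) _
  have hbr : b ≤ r := by
    calc b = (b ^ p) ^ (1 / p) := by rw [one_div, rpow_rpow_inv hb.le hp0]
      _ ≤ r := rpow_le_rpow (by positivity) hT (by positivity)
  have hr : 0 < r := hb.trans_le hbr
  have hTr : T = n * r ^ p := by
    rw [hr_def, one_div, rpow_inv_rpow (div_nonneg hT0 hn'.le) hp0]
    field_simp
  have hS : z * n * r ≤ ∑ j ∈ Finset.range n, x j := by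
    rwa [mul_assoc, rpow_one_sub_one_div_mul_rpow_one_div p hn' hT0, ← mul_assoc] at hx
  set u := κ * r with hu_def
  have hu : 0 < u := mul_pos hκ hr
  have hsplit : ∑ j ∈ Finset.range n, x j
      ≤ ∑ j ∈ Finset.range n, min (max (x j) 0) u + u ^ (1 - p) * T := by
    rw [Finset.mul_sum, ← Finset.sum_add_distrib]
    exact Finset.sum_le_sum fun j _ => le_min_add_rpow hp.le hu (x j)
  have hexcess : u ^ (1 - p) * T ≤ z / 2 * n * r := by
    have hrr : r ^ (1 - p) * r ^ p = r := by rw [← rpow_add hr]; simp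
    calc u ^ (1 - p) * T = κ ^ (1 - p) * n * (r ^ (1 - p) * r ^ p) := by
          rw [mul_rpow hκ.le hr.le, hTr]; ring
      _ ≤ z / 2 * n * r := by rw [hrr]; gcongr
  have htrunc : ∑ j ∈ Finset.range n, min (max (x j) 0) u
      ≤ u * ∑ j ∈ Finset.range n, trunc (κ * b) (x j) := by
    rw [Finset.mul_sum]
    exact Finset.sum_le_sum fun j _ =>
      min_le_mul_trunc (mul_pos hκ hb) (mul_le_mul_of_nonneg_left hbr hκ.le) (x j)
  calc z / (2 * κ) * n = z / 2 * n * r / u := by rw [hu_def]; field_simp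
    _ ≤ ∑ j ∈ Finset.range n, trunc (κ * b) (x j) := by
      rw [div_le_iff₀ hu]
      linarith

lemma exp_mul_le_one_add_mul_exp {w : ℝ} (s : ℝ) (h0 : 0 ≤ w) (h1 : w ≤ 1) :
    exp (s * w) ≤ 1 + w * exp s := by
  have h := convexOn_exp.2 (mem_univ 0) (mem_univ s) (sub_nonneg.2 h1) h0 (sub_add_cancel 1 w)
  simp only [smul_eq_mul, mul_zero, zero_add, exp_zero, mul_one] at h
  rw [mul_comm]
  linarith

lemma tendsto_ofReal_trunc_atTop (x : ℝ) :
    Tendsto (fun u => ENNReal.ofReal (trunc u x)) atTop (𝓝 0) := by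
  have h := ((tendsto_const_nhds (x := max x 0)).div_atTop tendsto_id).min
    (tendsto_const_nhds (x := (1 : ℝ)))
  simpa only [trunc, id_eq, min_self, zero_div, min_eq_left zero_le_one, ENNReal.ofReal_zero]
    using ENNReal.tendsto_ofReal h

lemma inv_mul_log_le_of_le_ofReal_exp {x : ℝ≥0∞} {L : ℝ} {n : ℕ} (hn : 0 < n)
    (hx : x ≤ ENNReal.ofReal (exp (L * n))) :
    (((n : ℝ)⁻¹ : ℝ) : EReal) * ENNReal.log x ≤ L := by
  have hlog : ENNReal.log x ≤ ((L * n : ℝ) : EReal) := by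
    simpa only [ENNReal.log_ofReal_of_pos (exp_pos _), log_exp] using ENNReal.log_le_log hx
  calc (((n : ℝ)⁻¹ : ℝ) : EReal) * ENNReal.log x
      ≤ (((n : ℝ)⁻¹ : ℝ) : EReal) * ((L * n : ℝ) : EReal) :=
        mul_le_mul_of_nonneg_left hlog (EReal.coe_nonneg.2 (by positivity))
    _ = L := by
        rw [← EReal.coe_mul]
        congr 1
        field_simp

lemma limsup_inv_mul_log_le {u : ℕ → ℝ≥0∞} {J : EReal}
    (h : ∀ L : ℝ, J < L →
      ∃ K : ℝ≥0, ∀ᶠ n : ℕ in atTop, u n ≤ K * ENNReal.ofReal (exp (L * n))) :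
    limsup (fun n : ℕ => (((n : ℝ)⁻¹ : ℝ) : EReal) * ENNReal.log (u n)) atTop ≤ J := by
  refine le_of_forall_gt_imp_ge_of_dense fun L' hL' => ?_
  obtain ⟨L, hJL, hLL'⟩ := EReal.exists_between_coe_real hL'
  obtain ⟨M, hJM, hML⟩ := EReal.exists_between_coe_real hJL
  obtain ⟨K, hK⟩ := h M hJM
  have hgrow : ∀ᶠ n : ℕ in atTop, (K : ℝ) ≤ exp ((L - M) * n) :=
    (tendsto_exp_atTop.comp (tendsto_natCast_atTop_atTop.const_mul_atTop
      (sub_pos.2 (EReal.coe_lt_coe_iff.1 hML)))).eventually_ge_atTop _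
  refine (limsup_le_of_le (by isBoundedDefault) ?_).trans hLL'.le
  filter_upwards [hK, hgrow, eventually_gt_atTop 0] with n hKn hgrow hn
  refine inv_mul_log_le_of_le_ofReal_exp hn (hKn.trans ?_)
  rw [← ENNReal.ofReal_coe_nnreal, ← ENNReal.ofReal_mul K.coe_nonneg]
  refine ENNReal.ofReal_le_ofReal
    ((mul_le_mul_of_nonneg_right hgrow (exp_pos _).le).trans_eq ?_)
  rw [← exp_add]
  ring_nf

variable {Ω : Type*} [MeasurableSpace Ω]

/-- `A_n(z)`. -/
def event (X : ℕ → Ω → ℝ) (p z : ℝ) (n : ℕ) : Set Ω :=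
  {ω | z * (n : ℝ) ^ (1 - 1 / p) * (∑ j ∈ Finset.range n, |X j ω| ^ p) ^ (1 / p)
    ≤ ∑ j ∈ Finset.range n, X j ω}

/-- `J_z`. -/
def rate (P : Measure Ω) (Y : Ω → ℝ) (p z : ℝ) : EReal :=
  ⨆ c : {c : ℝ // 0 ≤ c}, ⨅ t : {t : ℝ // 0 ≤ t},
    ENNReal.log (∫⁻ ω, ENNReal.ofReal (exp (t * tilt z p c (Y ω))) ∂P)

lemma exists_lintegral_le_of_rate_lt {P : Measure Ω} {Y : Ω → ℝ} {p z L : ℝ}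
    (h : rate P Y p z < L) (c : {c : ℝ // 0 ≤ c}) :
    ∃ t : {t : ℝ // 0 ≤ t},
      ∫⁻ ω, ENNReal.ofReal (exp (t * tilt z p c (Y ω))) ∂P ≤ ENNReal.ofReal (exp L) := by
  obtain ⟨t, ht⟩ := iInf_lt_iff.1 ((le_iSup _ c).trans_lt h)
  refine ⟨t, ?_⟩
  rw [← ENNReal.log_le_log_iff, ENNReal.log_ofReal_of_pos (exp_pos _), log_exp]
  exact ht.le

lemma measure_ge_le_exp_neg_mul_lintegral_exp (μ : Measure Ω) {Y : Ω → ℝ} (hY : Measurable Y)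
    (b : ℝ) :
    μ {ω | b ≤ Y ω} ≤ ENNReal.ofReal (exp (-b)) * ∫⁻ ω, ENNReal.ofReal (exp (Y ω)) ∂μ := by
  have hsub : {ω | b ≤ Y ω} ⊆ {ω | ENNReal.ofReal (exp b) ≤ ENNReal.ofReal (exp (Y ω))} :=
    fun ω h => ENNReal.ofReal_le_ofReal (exp_le_exp.2 h)
  calc μ {ω | b ≤ Y ω}
      = ENNReal.ofReal (exp (-b)) * (ENNReal.ofReal (exp b) * μ {ω | b ≤ Y ω}) := by
        rw [← mul_assoc, ← ENNReal.ofReal_mul (exp_pos _).le, ← exp_add, neg_add_cancel,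
          exp_zero, ENNReal.ofReal_one, one_mul]
    _ ≤ _ := by
        gcongr
        exact (mul_le_mul' le_rfl (measure_mono hsub)).trans
          (mul_meas_ge_le_lintegral₀ hY.exp.ennreal_ofReal.aemeasurable _)

lemma tendsto_lintegral_trunc (μ : Measure Ω) [IsFiniteMeasure μ] {Y : Ω → ℝ}
    (hY : Measurable Y) :
    Tendsto (fun u => ∫⁻ ω, ENNReal.ofReal (trunc u (Y ω)) ∂μ) atTop (𝓝 0) := by
  have h := tendsto_lintegral_filter_of_dominated_convergence (μ := μ)
    (F := fun u ω => ENNReal.ofReal (trunc u (Y ω))) (fun _ => 1)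
    (Eventually.of_forall fun u => by unfold trunc; fun_prop)
    (Eventually.of_forall fun u =>
      ae_of_all _ fun ω => ENNReal.ofReal_le_one.2 (min_le_right _ _))
    (by simp) (ae_of_all _ fun ω => tendsto_ofReal_trunc_atTop (Y ω))
  simpa using h

lemma lintegral_exp_mul_le_two (μ : Measure Ω) [IsProbabilityMeasure μ] {W : Ω → ℝ}
    (hW : Measurable W) (h0 : ∀ ω, 0 ≤ W ω) (h1 : ∀ ω, W ω ≤ 1) (s : ℝ)
    (hm : ∫⁻ ω, ENNReal.ofReal (W ω) ∂μ ≤ ENNReal.ofReal (exp (-s))) :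
    ∫⁻ ω, ENNReal.ofReal (exp (s * W ω)) ∂μ ≤ 2 := by
  calc ∫⁻ ω, ENNReal.ofReal (exp (s * W ω)) ∂μ
      ≤ ∫⁻ ω, (1 + ENNReal.ofReal (exp s) * ENNReal.ofReal (W ω)) ∂μ := by
        refine lintegral_mono fun ω => ?_
        rw [← ENNReal.ofReal_mul (exp_pos _).le, ← ENNReal.ofReal_one,
          ← ENNReal.ofReal_add zero_le_one (mul_nonneg (exp_pos _).le (h0 ω)), mul_comm (exp s)]
        exact ENNReal.ofReal_le_ofReal (exp_mul_le_one_add_mul_exp s (h0 ω) (h1 ω))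
    _ = 1 + ENNReal.ofReal (exp s) * ∫⁻ ω, ENNReal.ofReal (W ω) ∂μ := by
        rw [lintegral_add_left measurable_const, lintegral_const, measure_univ, mul_one,
          lintegral_const_mul _ hW.ennreal_ofReal]
    _ ≤ 1 + ENNReal.ofReal (exp s) * ENNReal.ofReal (exp (-s)) := by gcongr
    _ = 2 := by
        rw [← ENNReal.ofReal_mul (exp_pos _).le, ← exp_add, add_neg_cancel, exp_zero,
          ENNReal.ofReal_one, one_add_one_eq_two]

section IID

variable {P : Measure Ω} {X : ℕ → Ω → ℝ} {p z : ℝ}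

lemma lintegral_exp_sum_eq_pow (hmeas : ∀ i, Measurable (X i)) (hindep : iIndepFun X P)
    (hident : ∀ i, IdentDistrib (X i) (X 0) P P) {g : ℝ → ℝ} (hg : Measurable g) (n : ℕ) :
    ∫⁻ ω, ENNReal.ofReal (exp (∑ j ∈ Finset.range n, g (X j ω))) ∂P
      = (∫⁻ ω, ENNReal.ofReal (exp (g (X 0 ω))) ∂P) ^ n := by
  have hu : Measurable fun x => ENNReal.ofReal (exp (g x)) := hg.exp.ennreal_ofReal
  simp_rw [exp_sum, ENNReal.ofReal_prod_of_nonneg fun j _ => (exp_pos (g (X j _))).le]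
  rw [lintegral_prod_eq_prod_lintegral_of_indepFun (Finset.range n)
      (fun j ω => ENNReal.ofReal (exp (g (X j ω)))) (hindep.comp _ fun _ => hu)
      fun j => hu.comp (hmeas j)]
  exact (Finset.prod_eq_pow_card fun j _ => ((hident j).comp hu).lintegral_eq).trans
    (by rw [Finset.card_range]; rfl)

lemma measure_sum_ge_le_exp (hmeas : ∀ i, Measurable (X i)) (hindep : iIndepFun X P)
    (hident : ∀ i, IdentDistrib (X i) (X 0) P P) {g : ℝ → ℝ} (hg : Measurable g) {M : ℝ}
    (hM : ∫⁻ ω, ENNReal.ofReal (exp (g (X 0 ω))) ∂P ≤ ENNReal.ofReal (exp M)) (b : ℝ) (n : ℕ) :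
    P {ω | b ≤ ∑ j ∈ Finset.range n, g (X j ω)} ≤ ENNReal.ofReal (exp (M * n - b)) := by
  calc P {ω | b ≤ ∑ j ∈ Finset.range n, g (X j ω)}
      ≤ ENNReal.ofReal (exp (-b)) *
          ∫⁻ ω, ENNReal.ofReal (exp (∑ j ∈ Finset.range n, g (X j ω))) ∂P :=
        measure_ge_le_exp_neg_mul_lintegral_exp P
          (Finset.measurable_sum _ fun j _ => hg.comp (hmeas j)) b
    _ ≤ ENNReal.ofReal (exp (-b)) * ENNReal.ofReal (exp M) ^ n := by
        rw [lintegral_exp_sum_eq_pow hmeas hindep hident hg]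
        gcongr
    _ = ENNReal.ofReal (exp (M * n - b)) := by
        rw [← ENNReal.ofReal_pow (exp_pos _).le, ← ENNReal.ofReal_mul (exp_pos _).le,
          ← exp_nat_mul, ← exp_add]
        ring_nf

lemma exists_measure_sum_trunc_ge_le_exp (hmeas : ∀ i, Measurable (X i))
    (hindep : iIndepFun X P) (hident : ∀ i, IdentDistrib (X i) (X 0) P P) {β : ℝ} (hβ : 0 < β)
    (L : ℝ) :
    ∃ u > 0, ∀ n : ℕ,
      P {ω | β * n ≤ ∑ j ∈ Finset.range n, trunc u (X j ω)} ≤ ENNReal.ofReal (exp (L * n)) := by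
  have := hindep.isProbabilityMeasure
  set s := |log 2 - L| / β
  have hs : 0 ≤ s := by positivity
  have hsβ : log 2 - L ≤ s * β := by rw [div_mul_cancel₀ _ hβ.ne']; exact le_abs_self _
  obtain ⟨u, hu, hu0⟩ := (((tendsto_order.1 (tendsto_lintegral_trunc P (hmeas 0))).2 _
    (ENNReal.ofReal_pos.2 (exp_pos (-s)))).and (eventually_gt_atTop 0)).exists
  have htrunc : Measurable (trunc u) := by unfold trunc; fun_prop
  have hmgf : ∫⁻ ω, ENNReal.ofReal (exp (s * trunc u (X 0 ω))) ∂P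
      ≤ ENNReal.ofReal (exp (log 2)) := by
    rw [exp_log two_pos, ENNReal.ofReal_ofNat]
    exact lintegral_exp_mul_le_two P (htrunc.comp (hmeas 0))
      (fun ω => le_min (by positivity) zero_le_one) (fun ω => min_le_right _ _) s hu.le
  refine ⟨u, hu0, fun n => ?_⟩
  calc P {ω | β * n ≤ ∑ j ∈ Finset.range n, trunc u (X j ω)}
      ≤ P {ω | s * (β * n) ≤ ∑ j ∈ Finset.range n, s * trunc u (X j ω)} :=
        measure_mono fun ω (h : β * n ≤ _) => by
          simpa only [mem_ofPred_eq, ← Finset.mul_sum] using mul_le_mul_of_nonneg_left h hs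
    _ ≤ ENNReal.ofReal (exp (log 2 * n - s * (β * n))) :=
        measure_sum_ge_le_exp hmeas hindep hident (htrunc.const_mul s) hmgf _ n
    _ ≤ ENNReal.ofReal (exp (L * n)) := by
        gcongr
        nlinarith [mul_le_mul_of_nonneg_right hsβ (Nat.cast_nonneg (α := ℝ) n)]

lemma exists_measure_event_inter_ge_le_exp (hmeas : ∀ i, Measurable (X i))
    (hindep : iIndepFun X P) (hident : ∀ i, IdentDistrib (X i) (X 0) P P) (hp : 1 < p)
    (hz : 0 < z) (L : ℝ) :
    ∃ B : ℝ, ∀ n : ℕ, 0 < n →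
      P (event X p z n ∩ {ω | B ≤ (∑ j ∈ Finset.range n, |X j ω| ^ p) / n})
        ≤ ENNReal.ofReal (exp (L * n)) := by
  obtain ⟨κ, hκ, hκ0⟩ := (((tendsto_rpow_neg_atTop (sub_pos.2 hp)).eventually
    (ge_mem_nhds (half_pos hz))).and (eventually_gt_atTop 0)).exists
  rw [neg_sub] at hκ
  obtain ⟨u, hu, hP⟩ := exists_measure_sum_trunc_ge_le_exp hmeas hindep hident
    (β := z / (2 * κ)) (by positivity) L
  refine ⟨(u / κ) ^ p, fun n hn => (measure_mono ?_).trans (hP n)⟩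
  rintro ω ⟨hA, hT⟩
  have := sum_trunc_ge hp hκ0 hκ (div_pos hu hκ0) hn hA hT
  rwa [mul_div_cancel₀ _ hκ0.ne'] at this

lemma measure_event_inter_youngGap_le_exp (hmeas : ∀ i, Measurable (X i))
    (hindep : iIndepFun X P) (hident : ∀ i, IdentDistrib (X i) (X 0) P P) {c t δ M : ℝ}
    (hc : 0 ≤ c) (ht : 0 ≤ t)
    (hM : ∫⁻ ω, ENNReal.ofReal (exp (t * tilt z p c (X 0 ω))) ∂P ≤ ENNReal.ofReal (exp M))
    {n : ℕ} (hn : 0 < n) :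
    P (event X p z n ∩
        {ω | -δ < t * z * youngGap p c ((∑ j ∈ Finset.range n, |X j ω| ^ p) / n)})
      ≤ ENNReal.ofReal (exp ((M + δ) * n)) := by
  have htilt : Measurable fun x => t * tilt z p c x := by unfold tilt; fun_prop
  refine (measure_mono ?_).trans
    ((measure_sum_ge_le_exp hmeas hindep hident htilt hM (-δ * n) n).trans_eq (by ring_nf))
  rintro ω ⟨hA, hloc : -δ < _⟩
  have hsum := mul_le_mul_of_nonneg_left (sum_tilt_ge hc hn hA) ht
  have hloc' := mul_le_mul_of_nonneg_right hloc.le (Nat.cast_nonneg (α := ℝ) n)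
  show -δ * n ≤ ∑ j ∈ Finset.range n, t * tilt z p c (X j ω)
  rw [← Finset.mul_sum]
  linear_combination hsum + hloc'

lemma exists_measure_event_le_mul_exp (hmeas : ∀ i, Measurable (X i))
    (hindep : iIndepFun X P) (hident : ∀ i, IdentDistrib (X i) (X 0) P P) (hp : 1 < p)
    (hz : 0 < z) {L : ℝ} (hL : rate P (X 0) p z < L) :
    ∃ K : ℝ≥0, ∀ᶠ n : ℕ in atTop, P (event X p z n) ≤ K * ENNReal.ofReal (exp (L * n)) := by
  obtain ⟨L₁, hL₁, hL₁L⟩ := EReal.exists_between_coe_real hL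
  have hδ : 0 < L - L₁ := sub_pos.2 (EReal.coe_lt_coe_iff.1 hL₁L)
  choose t ht using exists_lintegral_le_of_rate_lt hL₁
  obtain ⟨B, hB⟩ := exists_measure_event_inter_ge_le_exp hmeas hindep hident hp hz L
  obtain ⟨C, hC⟩ := exists_finset_youngGap_cover hp (fun c => t c * z) hδ B
  refine ⟨C.card + 1, ?_⟩
  filter_upwards [eventually_gt_atTop 0] with n hn
  set ρ : Ω → ℝ := fun ω => (∑ j ∈ Finset.range n, |X j ω| ^ p) / n
  have hcover : event X p z n ⊆ (event X p z n ∩ {ω | B ≤ ρ ω}) ∪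
      ⋃ c ∈ C, event X p z n ∩ {ω | -(L - L₁) < t c * z * youngGap p c (ρ ω)} := by
    intro ω hω
    by_cases hBω : B ≤ ρ ω
    · exact Or.inl ⟨hω, hBω⟩
    · have hρ : 0 ≤ ρ ω := div_nonneg (Finset.sum_nonneg fun j _ => by positivity) n.cast_nonneg
      obtain ⟨c, hc, hcω⟩ := mem_iUnion₂.1 (hC ⟨hρ, (not_le.1 hBω).le⟩)
      exact Or.inr (mem_iUnion₂.2 ⟨c, hc, hω, hcω⟩)
  calc P (event X p z n)
      ≤ P (event X p z n ∩ {ω | B ≤ ρ ω}) + ∑ c ∈ C,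
          P (event X p z n ∩ {ω | -(L - L₁) < t c * z * youngGap p c (ρ ω)}) :=
        (measure_mono hcover).trans ((measure_union_le _ _).trans
          (add_le_add le_rfl (measure_biUnion_finset_le _ _)))
    _ ≤ ENNReal.ofReal (exp (L * n)) +
          ∑ c ∈ C, ENNReal.ofReal (exp ((L₁ + (L - L₁)) * n)) := by
        gcongr with c
        · exact hB n hn
        · exact measure_event_inter_youngGap_le_exp hmeas hindep hident c.2 (t c).2 (ht c) hn
    _ = (C.card + 1 : ℝ≥0) * ENNReal.ofReal (exp (L * n)) := by
        rw [add_sub_cancel, Finset.sum_const, nsmul_eq_mul]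
        push_cast
        ring

end IID

end SelfNormalized

end

theorem self_normalized_LD_upper_bound_general
    {Ω : Type*} [MeasurableSpace Ω] (P : Measure Ω)
    (X : ℕ → Ω → ℝ) (hmeas : ∀ i, Measurable (X i))
    (hindep : iIndepFun X P)
    (hident : ∀ i, IdentDistrib (X i) (X 0) P P)
    (p : ℝ) (hp : 1 < p)
    (z : ℝ) (hz0 : 0 < z) :
    Filter.limsup
        (fun n : ℕ =>
          (((n : ℝ)⁻¹ : ℝ) : EReal) *
            ENNReal.log
              (P {ω | z * (n : ℝ) ^ (1 - 1 / p) *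
                    (∑ j ∈ Finset.range n, |X j ω| ^ p) ^ (1 / p)
                  ≤ ∑ j ∈ Finset.range n, X j ω}))
        atTop
      ≤ (⨆ c : {c : ℝ // 0 ≤ c}, ⨅ t : {t : ℝ // 0 ≤ t},
          ENNReal.log (∫⁻ ω, ENNReal.ofReal
            (Real.exp ((t : ℝ) * ((c : ℝ) * X 0 ω -
              z / p * (|X 0 ω| ^ p + (p - 1) * (c : ℝ) ^ (p / (p - 1)))))) ∂P)) :=
  SelfNormalized.limsup_inv_mul_log_le fun _ hL =>
    SelfNormalized.exists_measure_event_le_mul_exp hmeas hindep hident hp hz0 hL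

/-- **Upper large-deviation bound for self-normalized sums.**
Let `p > 1` and `P(X > 0) > 0`. Then for every `z > 0` with `z > z*`:
`limsup_{n→∞} n⁻¹ · ln P(Aₙ(z)) ≤ J_z` in the extended real line. -/
theorem self_normalized_LD_upper_bound
    {Ω : Type*} [MeasurableSpace Ω] (P : Measure Ω) [IsProbabilityMeasure P]
    (X : ℕ → Ω → ℝ) (hmeas : ∀ i, Measurable (X i))
    (hindep : iIndepFun X P)
    (hident : ∀ i, IdentDistrib (X i) (X 0) P P)
    (hpos : 0 < P {ω | 0 < X 0 ω})
    (p : ℝ) (hp : 1 < p)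
    (z : ℝ) (hz0 : 0 < z)
    (hz : (if Integrable (fun ω => |X 0 ω| ^ p) P
        then (∫ ω, X 0 ω ∂P) * (∫ ω, |X 0 ω| ^ p ∂P) ^ (-(1 / p)) else 0) < z) :
    Filter.limsup
        (fun n : ℕ =>
          (((n : ℝ)⁻¹ : ℝ) : EReal) *
            ENNReal.log
              (P {ω | z * (n : ℝ) ^ (1 - 1 / p) *
                    (∑ j ∈ Finset.range n, |X j ω| ^ p) ^ (1 / p)
                  ≤ ∑ j ∈ Finset.range n, X j ω}))
        atTop
      ≤ (⨆ c : {c : ℝ // 0 ≤ c}, ⨅ t : {t : ℝ // 0 ≤ t},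
          ENNReal.log (∫⁻ ω, ENNReal.ofReal
            (Real.exp ((t : ℝ) * ((c : ℝ) * X 0 ω -
              z / p * (|X 0 ω| ^ p + (p - 1) * (c : ℝ) ^ (p / (p - 1)))))) ∂P)) :=
  self_normalized_LD_upper_bound_general P X hmeas hindep hident p hp z hz0
end

section
/- (Lemma 1) Let p > 1 and let X be a real random variable with P(X > 0) > 0 whose law is not concentrated on at most two points (so that the law of (X,|X|^p) is not supported on an affine line in ℝ²). Then for every z with max(z*, 0) < z < 1: inf_{α ∈ B_z} Λ(α) = inf_{α ∈ B̃_z} Λ(α) < ∞. -/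
open MeasureTheory ProbabilityTheory Real Filter Set
open scoped ENNReal Classical

/-- The cumulant function `A(λ) = ln E exp(λ₁ X + λ₂ |X|^p)` of the vector `(X, |X|^p)`,
with values in the extended reals. -/
noncomputable def selfNormCumulant {Ω : Type*} [MeasurableSpace Ω] (P : Measure Ω)
    (X : Ω → ℝ) (p : ℝ) (l : ℝ × ℝ) : EReal :=
  ENNReal.log (∫⁻ ω, ENNReal.ofReal (Real.exp (l.1 * X ω + l.2 * |X ω| ^ p)) ∂P)

/-- The rate function `Λ(α) = sup_λ (⟨α, λ⟩ − A(λ))` of the vector `(X, |X|^p)`. -/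
noncomputable def selfNormRate {Ω : Type*} [MeasurableSpace Ω] (P : Measure Ω)
    (X : Ω → ℝ) (p : ℝ) (α : ℝ × ℝ) : EReal :=
  ⨆ l : ℝ × ℝ, (((α.1 * l.1 + α.2 * l.2 : ℝ) : EReal) - selfNormCumulant P X p l)

/-!
`Λ` is a supremum of affine functions, hence quasiconvex, and Jensen's inequality gives
`Λ(E_Q ζ) ≤ -log c` for every probability measure `Q` with `c • Q ≤ P`.

If `E|X|^p < ∞`, the mean `m = E ζ` has `Λ(m) ≤ 0 ≤ Λ` and, because `z > z*`, lies strictly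
outside `B_z`; the segment from `m` to any `α ∈ B_z` crosses `B̃_z` at a point `β` with
`Λ(β) ≤ max(Λ(m), Λ(α)) = Λ(α)`. If `E|X|^p = ∞`, then `A(λ) = ∞` whenever `λ₂ > 0`, so `Λ` is
nonincreasing in `α₂` and `α` can be moved up to `B̃_z`.

For finiteness, `P(X > 0) > 0` forces some shell `a < X ≤ a/z` to have positive probability `c`;
the conditional mean of `ζ` on that shell lies in `B_z` and has `Λ ≤ -log c`.
-/

def ratioRegion (p z : ℝ) : Set (ℝ × ℝ) := {x | 0 ≤ x.2 ∧ z * x.2 ^ (1 / p) ≤ x.1}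

def ratioBoundary (p z : ℝ) : Set (ℝ × ℝ) := {x | 0 ≤ x.2 ∧ x.1 = z * x.2 ^ (1 / p)}

lemma exists_mem_segment_mem_ratioBoundary {p z : ℝ} (hp : 0 ≤ p) {μ α : ℝ × ℝ}
    (hμ₂ : 0 ≤ μ.2) (hμ : μ.1 < z * μ.2 ^ (1 / p)) (hα : α ∈ ratioRegion p z) :
    ∃ β ∈ segment ℝ μ α, β ∈ ratioBoundary p z := by
  have hF : Continuous fun x : ℝ × ℝ => x.1 - z * x.2 ^ (1 / p) :=
    continuous_fst.sub (continuous_const.mul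
      ((continuous_rpow_const (one_div_nonneg.2 hp)).comp continuous_snd))
  obtain ⟨β, hβ, hFβ⟩ := (convex_segment μ α).isPreconnected.intermediate_value
    (left_mem_segment ℝ μ α) (right_mem_segment ℝ μ α) hF.continuousOn
    (show (0 : ℝ) ∈ Icc _ _ from ⟨by linarith, by linarith [hα.2]⟩)
  have hβ₂ : 0 ≤ β.2 := by
    obtain ⟨s, t, hs, ht, -, rfl⟩ := hβ
    simpa using add_nonneg (mul_nonneg hs hμ₂) (mul_nonneg ht hα.1)
  exact ⟨β, hβ, hβ₂, by linarith [hFβ]⟩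

lemma exists_rpow_abs_le_add_exp {p b : ℝ} (hp : 1 < p) (hb : 0 < b) (a : ℝ) :
    ∃ K : ℝ, ∀ x : ℝ, |x| ^ p ≤ K + 2 / b * exp (a * x + b * |x| ^ p) := by
  set R := (2 * |a| / b) ^ (p - 1)⁻¹
  have hR : 0 ≤ R := by positivity
  refine ⟨R ^ p, fun x => ?_⟩
  rcases le_or_gt |x| R with hx | hx
  · have hexp : 0 ≤ 2 / b * exp (a * x + b * |x| ^ p) := by positivity
    linarith [rpow_le_rpow (abs_nonneg x) hx (by linarith : 0 ≤ p)]
  · -- beyond `R`, `|a x| ≤ (b / 2) |x| ^ p`, so the exponent is at least `(b / 2) |x| ^ p`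
    have hRp : R ^ (p - 1) = 2 * |a| / b := rpow_inv_rpow (by positivity) (by linarith)
    have hxp : 2 * |a| / b ≤ |x| ^ (p - 1) := hRp ▸ rpow_le_rpow hR hx.le (by linarith)
    have hsplit : |x| ^ p = |x| * |x| ^ (p - 1) := by
      rw [← rpow_one_add' (abs_nonneg x) (by linarith)]; ring_nf
    have hlin : 2 * (|a| * |x|) ≤ b * |x| ^ p := by
      rw [hsplit, div_le_iff₀ hb] at *
      nlinarith [abs_nonneg x]
    have hax : -(|a| * |x|) ≤ a * x := by rw [← abs_mul]; exact neg_abs_le _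
    have hexp := add_one_le_exp (a * x + b * |x| ^ p)
    have hmain : |x| ^ p ≤ 2 / b * exp (a * x + b * |x| ^ p) := by
      rw [div_mul_eq_mul_div, le_div_iff₀ hb]; nlinarith
    linarith [rpow_nonneg hR p]

section SelfNormRate

variable {Ω : Type*} [MeasurableSpace Ω] {P : Measure Ω} {X : Ω → ℝ} {p z : ℝ}

lemma ofReal_exp_integral_le_lintegral (Q : Measure Ω) [IsProbabilityMeasure Q] {g : Ω → ℝ}
    (hg : Integrable g Q) :
    ENNReal.ofReal (exp (∫ ω, g ω ∂Q)) ≤ ∫⁻ ω, ENNReal.ofReal (exp (g ω)) ∂Q := by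
  have hexp : 0 ≤ᵐ[Q] fun ω => exp (g ω) := Eventually.of_forall fun ω => (exp_pos _).le
  by_cases hei : Integrable (fun ω => exp (g ω)) Q
  · rw [← ofReal_integral_eq_lintegral_ofReal hei hexp]
    exact ENNReal.ofReal_le_ofReal <| convexOn_exp.map_integral_le continuous_exp.continuousOn
      isClosed_univ (Eventually.of_forall fun _ => mem_univ _) hg hei
  · rw [← lintegral_ofReal_ne_top_iff_integrable
      (continuous_exp.comp_aestronglyMeasurable hg.1) hexp, not_not] at hei
    exact hei ▸ le_top

lemma integrable_of_integrable_rpow_abs [IsFiniteMeasure P] (hp : 1 ≤ p)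
    (hX : AEStronglyMeasurable X P) (hXp : Integrable (fun ω => |X ω| ^ p) P) :
    Integrable X P := by
  have hLp : MemLp X (ENNReal.ofReal p) P := by
    rw [← integrable_norm_rpow_iff hX (by simp; linarith) ENNReal.ofReal_ne_top,
      ENNReal.toReal_ofReal (by linarith)]
    simpa using hXp
  exact memLp_one_iff_integrable.1 (hLp.mono_exponent (ENNReal.one_le_ofReal.2 hp))

lemma integral_rpow_abs_pos (hpos : 0 < P {ω | 0 < X ω})
    (hXp : Integrable (fun ω => |X ω| ^ p) P) : 0 < ∫ ω, |X ω| ^ p ∂P := by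
  rw [integral_pos_iff_support_of_nonneg (fun ω => rpow_nonneg (abs_nonneg _) _) hXp]
  exact hpos.trans_le <| measure_mono fun ω hω => (rpow_pos_of_pos (abs_pos.2 hω.ne') p).ne'

lemma exists_measure_Ioc_ne_zero (hpos : 0 < P {ω | 0 < X ω}) {r : ℝ} (hr : 1 < r) :
    ∃ a > 0, P {ω | X ω ∈ Ioc a (a * r)} ≠ 0 := by
  by_contra! h
  have hcover : {ω | 0 < X ω} ⊆ ⋃ k : ℤ, {ω | X ω ∈ Ioc (r ^ k) (r ^ k * r)} := fun ω hω =>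
    mem_iUnion.2 <| (exists_mem_Ioc_zpow hω hr).imp fun k hk => by
      rwa [← zpow_add_one₀ (by linarith)]
  exact hpos.ne' <| measure_mono_null hcover <| measure_iUnion_null fun k =>
    h _ (zpow_pos (by linarith) k)

lemma integral_mem_ratioRegion_of_ae_mem_Ioc {Q : Measure Ω} [IsProbabilityMeasure Q] {a : ℝ}
    (hp : 0 < p) (hz : 0 < z) (ha : 0 < a)
    (hXQ : ∀ᵐ ω ∂Q, X ω ∈ Ioc a (a * z⁻¹)) (hX : Integrable X Q)
    (hXp : Integrable (fun ω => |X ω| ^ p) Q) :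
    (∫ ω, X ω ∂Q, ∫ ω, |X ω| ^ p ∂Q) ∈ ratioRegion p z := by
  have hb : 0 ≤ a * z⁻¹ := by positivity
  have hm₁ : a ≤ ∫ ω, X ω ∂Q := by
    simpa using integral_mono_ae (integrable_const a) hX (hXQ.mono fun ω hω => hω.1.le)
  have hm₂ : ∫ ω, |X ω| ^ p ∂Q ≤ (a * z⁻¹) ^ p := by
    simpa using integral_mono_ae hXp (integrable_const ((a * z⁻¹) ^ p)) (hXQ.mono fun ω hω =>
      rpow_le_rpow (abs_nonneg _) ((abs_of_pos (ha.trans hω.1)).trans_le hω.2) hp.le)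
  refine ⟨integral_nonneg fun ω => rpow_nonneg (abs_nonneg _) _, ?_⟩
  calc z * (∫ ω, |X ω| ^ p ∂Q) ^ (1 / p) ≤ z * ((a * z⁻¹) ^ p) ^ (1 / p) := by gcongr
    _ = a := by rw [← rpow_mul hb, mul_one_div_cancel hp.ne', rpow_one]; field_simp
    _ ≤ _ := hm₁

lemma integrable_rpow_abs_of_lintegral_exp_ne_top [IsFiniteMeasure P] (hmeas : Measurable X)
    (hp : 1 < p) {l : ℝ × ℝ} (hl : 0 < l.2)
    (h : ∫⁻ ω, ENNReal.ofReal (exp (l.1 * X ω + l.2 * |X ω| ^ p)) ∂P ≠ ⊤) :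
    Integrable (fun ω => |X ω| ^ p) P := by
  have hXp : Measurable fun ω => |X ω| ^ p := hmeas.abs.pow_const p
  have hexp : Integrable (fun ω => exp (l.1 * X ω + l.2 * |X ω| ^ p)) P :=
    (lintegral_ofReal_ne_top_iff_integrable
      (((hmeas.const_mul _).add (hXp.const_mul _)).exp.aestronglyMeasurable)
      (Eventually.of_forall fun _ => (exp_pos _).le)).1 h
  obtain ⟨K, hK⟩ := exists_rpow_abs_le_add_exp hp hl l.1
  refine ((integrable_const K).add (hexp.const_mul (2 / l.2))).mono' hXp.aestronglyMeasurable
    (Eventually.of_forall fun ω => ?_)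
  rw [norm_of_nonneg (rpow_nonneg (abs_nonneg _) _)]
  exact hK (X ω)

lemma selfNormCumulant_eq_top [IsFiniteMeasure P] (hmeas : Measurable X) (hp : 1 < p)
    (hni : ¬ Integrable (fun ω => |X ω| ^ p) P) {l : ℝ × ℝ} (hl : 0 < l.2) :
    selfNormCumulant P X p l = ⊤ := by
  rw [selfNormCumulant, ENNReal.log_eq_top_iff]
  by_contra h
  exact hni (integrable_rpow_abs_of_lintegral_exp_ne_top hmeas hp hl h)

lemma selfNormRate_nonneg [IsProbabilityMeasure P] (α : ℝ × ℝ) :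
    0 ≤ selfNormRate P X p α := by
  refine le_trans ?_ (le_iSup _ (0 : ℝ × ℝ))
  simp [selfNormCumulant]

lemma quasiconvexOn_selfNormRate : QuasiconvexOn ℝ univ (selfNormRate P X p) := by
  intro r
  have hsub : {α ∈ univ | selfNormRate P X p α ≤ r} = ⋂ l : ℝ × ℝ,
      (fun α : ℝ × ℝ => α.1 * l.1 + α.2 * l.2) ⁻¹'
        {s : ℝ | (s : EReal) - selfNormCumulant P X p l ≤ r} := by
    ext α; simp [selfNormRate]
  rw [hsub]
  refine convex_iInter fun l => ?_
  have hlower : IsLowerSet {s : ℝ | (s : EReal) - selfNormCumulant P X p l ≤ r} :=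
    fun s t hts hs => le_trans (EReal.sub_le_sub (EReal.coe_le_coe_iff.2 hts) le_rfl) hs
  exact hlower.ordConnected.convex.is_linear_preimage
    ⟨fun x y => by simp only [Prod.fst_add, Prod.snd_add]; ring,
      fun c x => by simp only [Prod.smul_fst, Prod.smul_snd, smul_eq_mul]; ring⟩

lemma selfNormRate_integral_le_neg_log (Q : Measure Ω) [IsProbabilityMeasure Q] {c : ℝ}
    (hc : 0 < c) (hQ : ENNReal.ofReal c • Q ≤ P) (hX : Integrable X Q)
    (hXp : Integrable (fun ω => |X ω| ^ p) Q) :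
    selfNormRate P X p (∫ ω, X ω ∂Q, ∫ ω, |X ω| ^ p ∂Q) ≤ ((-Real.log c : ℝ) : EReal) := by
  refine iSup_le fun l => ?_
  set m : ℝ := (∫ ω, X ω ∂Q) * l.1 + (∫ ω, |X ω| ^ p ∂Q) * l.2
  have hm : ∫ ω, l.1 * X ω + l.2 * |X ω| ^ p ∂Q = m := by
    rw [integral_add (hX.const_mul l.1) (hXp.const_mul l.2), integral_const_mul,
      integral_const_mul]
    ring
  have hjensen : ENNReal.ofReal c * ENNReal.ofReal (exp m)
      ≤ ∫⁻ ω, ENNReal.ofReal (exp (l.1 * X ω + l.2 * |X ω| ^ p)) ∂P :=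
    calc ENNReal.ofReal c * ENNReal.ofReal (exp m)
        ≤ ENNReal.ofReal c * ∫⁻ ω, ENNReal.ofReal (exp (l.1 * X ω + l.2 * |X ω| ^ p)) ∂Q := by
          gcongr
          exact hm ▸ ofReal_exp_integral_le_lintegral Q
            ((hX.const_mul l.1).add (hXp.const_mul l.2))
      _ ≤ _ := by
          rw [← smul_eq_mul, ← lintegral_smul_measure]
          exact lintegral_mono' hQ le_rfl
  have hlog : ((Real.log c + m : ℝ) : EReal) ≤ selfNormCumulant P X p l := by
    have := ENNReal.log_monotone hjensen
    rwa [ENNReal.log_mul_add, ENNReal.log_ofReal_of_pos hc, ENNReal.log_ofReal_of_pos (exp_pos _),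
      log_exp, ← EReal.coe_add] at this
  rw [EReal.sub_le_iff_le_add (Or.inr (EReal.coe_ne_top _)) (Or.inr (EReal.coe_ne_bot _))]
  calc ((m : ℝ) : EReal) = ((-Real.log c : ℝ) : EReal) + ((Real.log c + m : ℝ) : EReal) := by
        rw [← EReal.coe_add]; ring_nf
    _ ≤ _ := add_le_add_right hlog _

lemma selfNormRate_integral_nonpos [IsProbabilityMeasure P] (hX : Integrable X P)
    (hXp : Integrable (fun ω => |X ω| ^ p) P) :
    selfNormRate P X p (∫ ω, X ω ∂P, ∫ ω, |X ω| ^ p ∂P) ≤ 0 := by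
  simpa using selfNormRate_integral_le_neg_log P one_pos (by simp) hX hXp

lemma selfNormRate_cond_integral_le_neg_log {C : Set Ω} (hC : P C ≠ 0) [IsFiniteMeasure P]
    (hX : Integrable X P[|C]) (hXp : Integrable (fun ω => |X ω| ^ p) P[|C]) :
    selfNormRate P X p (∫ ω, X ω ∂P[|C], ∫ ω, |X ω| ^ p ∂P[|C])
      ≤ ((-Real.log (P.real C) : ℝ) : EReal) := by
  have : IsProbabilityMeasure P[|C] := cond_isProbabilityMeasure hC
  refine selfNormRate_integral_le_neg_log _ (ENNReal.toReal_pos hC (measure_ne_top P C)) ?_ hX hXp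
  rw [ofReal_measureReal, ProbabilityTheory.cond, smul_smul,
    ENNReal.mul_inv_cancel hC (measure_ne_top P C), one_smul]
  exact Measure.restrict_le_self

lemma selfNormRate_le_of_snd_le [IsFiniteMeasure P] (hmeas : Measurable X) (hp : 1 < p)
    (hni : ¬ Integrable (fun ω => |X ω| ^ p) P) {α β : ℝ × ℝ} (h₁ : β.1 = α.1)
    (h₂ : α.2 ≤ β.2) : selfNormRate P X p β ≤ selfNormRate P X p α := by
  refine iSup_le fun l => ?_
  rcases le_or_gt l.2 0 with hl | hl
  · refine le_trans ?_ (le_iSup _ l)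
    refine EReal.sub_le_sub (EReal.coe_le_coe_iff.2 ?_) le_rfl
    rw [h₁]
    nlinarith
  · rw [selfNormCumulant_eq_top hmeas hp hni hl, EReal.sub_top]
    exact bot_le

lemma exists_mem_ratioBoundary_selfNormRate_le_of_integrable [IsProbabilityMeasure P]
    (hp : 1 ≤ p) (hmeas : Measurable X) (hXp : Integrable (fun ω => |X ω| ^ p) P)
    (hmean : ∫ ω, X ω ∂P < z * (∫ ω, |X ω| ^ p ∂P) ^ (1 / p)) {α : ℝ × ℝ}
    (hα : α ∈ ratioRegion p z) :
    ∃ β ∈ ratioBoundary p z, selfNormRate P X p β ≤ selfNormRate P X p α := by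
  obtain ⟨β, hβseg, hβ⟩ := exists_mem_segment_mem_ratioBoundary
    (μ := (∫ ω, X ω ∂P, ∫ ω, |X ω| ^ p ∂P)) (by linarith)
    (integral_nonneg fun ω => rpow_nonneg (abs_nonneg _) _) hmean hα
  have hmean_rate : selfNormRate P X p (∫ ω, X ω ∂P, ∫ ω, |X ω| ^ p ∂P) ≤ selfNormRate P X p α :=
    (selfNormRate_integral_nonpos (integrable_of_integrable_rpow_abs hp
      hmeas.aestronglyMeasurable hXp) hXp).trans (selfNormRate_nonneg α)
  exact ⟨β, hβ, (Convex.segment_subset (quasiconvexOn_selfNormRate _) ⟨mem_univ _, hmean_rate⟩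
    ⟨mem_univ α, le_rfl⟩ hβseg).2⟩

lemma exists_mem_ratioBoundary_selfNormRate_le_of_not_integrable [IsFiniteMeasure P]
    (hp : 1 < p) (hz : 0 < z) (hmeas : Measurable X)
    (hni : ¬ Integrable (fun ω => |X ω| ^ p) P) {α : ℝ × ℝ} (hα : α ∈ ratioRegion p z) :
    ∃ β ∈ ratioBoundary p z, selfNormRate P X p β ≤ selfNormRate P X p α := by
  have hα₁ : 0 ≤ α.1 / z := div_nonneg ((mul_nonneg hz.le (rpow_nonneg hα.1 _)).trans hα.2) hz.le
  refine ⟨(α.1, (α.1 / z) ^ p), ⟨rpow_nonneg hα₁ _, ?_⟩,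
    selfNormRate_le_of_snd_le hmeas hp hni rfl ?_⟩
  · rw [← rpow_mul hα₁, mul_one_div_cancel (by linarith), rpow_one, mul_div_cancel₀ _ hz.ne']
  · calc α.2 = (α.2 ^ (1 / p)) ^ p := by
          rw [← rpow_mul hα.1, one_div_mul_cancel (by linarith), rpow_one]
      _ ≤ (α.1 / z) ^ p := rpow_le_rpow (rpow_nonneg hα.1 _)
        ((le_div_iff₀ hz).2 ((mul_comm _ _).trans_le hα.2)) (by linarith)

lemma exists_mem_ratioRegion_selfNormRate_lt_top [IsProbabilityMeasure P] (hmeas : Measurable X)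
    (hp : 0 < p) (hz₀ : 0 < z) (hz₁ : z < 1) (hpos : 0 < P {ω | 0 < X ω}) :
    ∃ α ∈ ratioRegion p z, selfNormRate P X p α < ⊤ := by
  obtain ⟨a, ha, hC⟩ := exists_measure_Ioc_ne_zero hpos (one_lt_inv₀ hz₀ |>.2 hz₁)
  set C := {ω | X ω ∈ Ioc a (a * z⁻¹)}
  have : IsProbabilityMeasure P[|C] := cond_isProbabilityMeasure hC
  have hXC : ∀ᵐ ω ∂P[|C], X ω ∈ Ioc a (a * z⁻¹) := ae_cond_mem (hmeas measurableSet_Ioc)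
  have hX : Integrable X P[|C] :=
    Integrable.of_bound hmeas.aestronglyMeasurable _ <| hXC.mono fun ω hω =>
      (abs_of_pos (ha.trans hω.1)).trans_le hω.2
  have hXp : Integrable (fun ω => |X ω| ^ p) P[|C] :=
    Integrable.of_bound (hmeas.abs.pow_const p).aestronglyMeasurable _ <|
      hXC.mono fun ω hω => by
        rw [norm_of_nonneg (rpow_nonneg (abs_nonneg _) _)]
        exact rpow_le_rpow (abs_nonneg _) ((abs_of_pos (ha.trans hω.1)).trans_le hω.2) hp.le
  exact ⟨_, integral_mem_ratioRegion_of_ae_mem_Ioc hp hz₀ ha hXC hX hXp,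
    (selfNormRate_cond_integral_le_neg_log hC hX hXp).trans_lt (EReal.coe_lt_top _)⟩

end SelfNormRate

theorem rate_inf_on_Bz_eq_inf_on_boundary_and_finite_general
    {Ω : Type*} [MeasurableSpace Ω] (P : Measure Ω) [IsProbabilityMeasure P]
    (X : Ω → ℝ) (hmeas : Measurable X)
    (hpos : 0 < P {ω | 0 < X ω})
    (p : ℝ) (hp : 1 < p)
    (z : ℝ)
    (hz1 : max (if Integrable (fun ω => |X ω| ^ p) P
        then (∫ ω, X ω ∂P) * (∫ ω, |X ω| ^ p ∂P) ^ (-(1 / p)) else 0) 0 < z)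
    (hz2 : z < 1) :
    (⨅ α ∈ {x : ℝ × ℝ | 0 ≤ x.2 ∧ z * x.2 ^ (1 / p) ≤ x.1}, selfNormRate P X p α)
        = (⨅ α ∈ {x : ℝ × ℝ | 0 ≤ x.2 ∧ x.1 = z * x.2 ^ (1 / p)}, selfNormRate P X p α)
      ∧ (⨅ α ∈ {x : ℝ × ℝ | 0 ≤ x.2 ∧ z * x.2 ^ (1 / p) ≤ x.1}, selfNormRate P X p α)
        < ⊤ := by
  show (⨅ α ∈ ratioRegion p z, selfNormRate P X p α)
      = (⨅ α ∈ ratioBoundary p z, selfNormRate P X p α)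
    ∧ (⨅ α ∈ ratioRegion p z, selfNormRate P X p α) < ⊤
  have hz0 : 0 < z := (le_max_right _ _).trans_lt hz1
  have hboundary : ∀ α ∈ ratioRegion p z,
      ∃ β ∈ ratioBoundary p z, selfNormRate P X p β ≤ selfNormRate P X p α := by
    intro α hα
    by_cases hInt : Integrable (fun ω => |X ω| ^ p) P
    · have hm₂ := integral_rpow_abs_pos hpos hInt
      have hzstar : (∫ ω, X ω ∂P) / (∫ ω, |X ω| ^ p ∂P) ^ (1 / p) < z := by
        rw [if_pos hInt, rpow_neg hm₂.le, ← div_eq_mul_inv] at hz1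
        exact (le_max_left _ _).trans_lt hz1
      rw [div_lt_iff₀ (rpow_pos_of_pos hm₂ _)] at hzstar
      exact exists_mem_ratioBoundary_selfNormRate_le_of_integrable hp.le hmeas hInt hzstar hα
    · exact exists_mem_ratioBoundary_selfNormRate_le_of_not_integrable hp hz0 hmeas hInt hα
  obtain ⟨α₀, hα₀, hfin⟩ := exists_mem_ratioRegion_selfNormRate_lt_top hmeas
    (by linarith : 0 < p) hz0 hz2 hpos
  refine ⟨le_antisymm (biInf_mono fun x hx => ⟨hx.1, hx.2.ge⟩) (le_iInf₂ fun α hα => ?_),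
    (iInf₂_le α₀ hα₀).trans_lt hfin⟩
  obtain ⟨β, hβ, hle⟩ := hboundary α hα
  exact (iInf₂_le β hβ).trans hle

/-- **Lemma 1.** For `p > 1`, `P(X > 0) > 0` and the law of `X` not concentrated on at most
two points, for every `z` with `max(z*, 0) < z < 1` one has
`inf_{α ∈ B_z} Λ(α) = inf_{α ∈ B̃_z} Λ(α) < ∞`. -/
theorem rate_inf_on_Bz_eq_inf_on_boundary_and_finite
    {Ω : Type*} [MeasurableSpace Ω] (P : Measure Ω) [IsProbabilityMeasure P]
    (X : Ω → ℝ) (hmeas : Measurable X)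
    (hpos : 0 < P {ω | 0 < X ω})
    (hnondeg : ¬ ∃ a b : ℝ, ∀ᵐ ω ∂P, X ω = a ∨ X ω = b)
    (p : ℝ) (hp : 1 < p)
    (z : ℝ)
    (hz1 : max (if Integrable (fun ω => |X ω| ^ p) P
        then (∫ ω, X ω ∂P) * (∫ ω, |X ω| ^ p ∂P) ^ (-(1 / p)) else 0) 0 < z)
    (hz2 : z < 1) :
    (⨅ α ∈ {x : ℝ × ℝ | 0 ≤ x.2 ∧ z * x.2 ^ (1 / p) ≤ x.1}, selfNormRate P X p α)
        = (⨅ α ∈ {x : ℝ × ℝ | 0 ≤ x.2 ∧ x.1 = z * x.2 ^ (1 / p)}, selfNormRate P X p α)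
      ∧ (⨅ α ∈ {x : ℝ × ℝ | 0 ≤ x.2 ∧ z * x.2 ^ (1 / p) ≤ x.1}, selfNormRate P X p α)
        < ⊤ :=
  rate_inf_on_Bz_eq_inf_on_boundary_and_finite_general P X hmeas hpos p hp z hz1 hz2
end

section
/- (Lemma 2) Let p > 1 and let μ be a Borel probability measure on [0,∞) with ∫_{[0,∞)} t^p dμ(t) = ∞. Then (∫_{[0,x]} t dμ(t))^p = o(∫_{[0,x]} t^p dμ(t)) as x → ∞, i.e., the ratio (∫_{[0,x]} t dμ(t))^p / ∫_{[0,x]} t^p dμ(t) tends to 0 as x → ∞. -/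
/-!
Split `∫_{[0,x]} t dμ` at a level `A`: the part below `A` is at most `A`, and by Hölder the part
above `A` is at most `μ(A,∞)^{1/q} P(x)^{1/p}`, where `P(x) = ∫_{[0,x]} t^p dμ` and `q` is the
conjugate exponent. The tail mass `μ(A,∞)` can be made arbitrarily small while `P(x) → ∞`, so
`(∫_{[0,x]} t dμ) / P(x)^{1/p} → 0`; raising to the power `p` gives the claim. The estimates are
done for lower Lebesgue integrals, whose `toReal` are the Bochner integrals of the statement.
-/

open MeasureTheory Filter Set
open scoped ENNReal Topology

theorem ENNReal.tendsto_div_nhds_zero_of_le_add_mul {α : Type*} {l : Filter α} {f g : α → ℝ≥0∞}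
    (hg : Tendsto g l (𝓝 ∞)) (h : ∀ δ ≠ 0, ∃ C ≠ ∞, ∀ᶠ x in l, f x ≤ C + δ * g x) :
    Tendsto (fun x => f x / g x) l (𝓝 0) := by
  rw [ENNReal.tendsto_nhds_zero]
  intro ε hε
  have hε2 : ε / 2 ≠ 0 := (ENNReal.half_pos hε.ne').ne'
  obtain ⟨C, hC, hfg⟩ := h (ε / 2) hε2
  have hCg : ∀ᶠ x in l, C ≤ ε / 2 * g x := by
    have h2g := ENNReal.Tendsto.const_mul hg (.inl ENNReal.top_ne_zero) (a := ε / 2)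
    rw [ENNReal.mul_top hε2] at h2g
    exact h2g.eventually_const_le hC.lt_top
  filter_upwards [hfg, hCg] with x hfx hCx
  refine ENNReal.div_le_of_le_mul ?_
  calc f x ≤ ε / 2 * g x + ε / 2 * g x := hfx.trans (add_le_add_left hCx _)
    _ = ε * g x := by rw [← add_mul, ENNReal.add_halves]

theorem ENNReal.ofReal_rpow_le {p : ℝ} (hp : 0 ≤ p) (t : ℝ) :
    ENNReal.ofReal t ^ p ≤ ENNReal.ofReal (t ^ p) := by
  rcases le_total 0 t with ht | ht
  · exact (ENNReal.ofReal_rpow_of_nonneg ht hp).le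
  · rcases hp.eq_or_lt with rfl | hp
    · simp
    · simp [ENNReal.ofReal_of_nonpos ht, ENNReal.zero_rpow_of_pos hp]

theorem tendsto_measure_Ioi_atTop_nhds_zero (μ : Measure ℝ) [IsFiniteMeasure μ] :
    Tendsto (fun x => μ (Ioi x)) atTop (𝓝 0) := by
  have h := tendsto_measure_iInter_atTop (μ := μ) (fun x : ℝ => measurableSet_Ioi.nullMeasurableSet)
    (fun _ _ hab => Ioi_subset_Ioi hab) ⟨0, measure_ne_top μ _⟩
  have hempty : (⋂ x : ℝ, Ioi x) = ∅ := iInter_eq_empty_iff.2 fun t => ⟨t, lt_irrefl t⟩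
  rwa [hempty, measure_empty] at h

theorem tendsto_setLIntegral_Icc_atTop (μ : Measure ℝ) (f : ℝ → ℝ≥0∞) (a : ℝ) :
    Tendsto (fun x => ∫⁻ t in Icc a x, f t ∂μ) atTop (𝓝 (∫⁻ t in Ici a, f t ∂μ)) := by
  simp_rw [← withDensity_apply f measurableSet_Icc, ← withDensity_apply f measurableSet_Ici,
    ← iUnion_Icc_right a]
  exact tendsto_measure_iUnion_atTop fun _ _ h => Icc_subset_Icc_right h

theorem setLIntegral_ofReal_le_measure_rpow_mul {μ : Measure ℝ} {p q : ℝ}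
    (hpq : p.HolderConjugate q) (s : Set ℝ) :
    ∫⁻ t in s, ENNReal.ofReal t ∂μ ≤
      μ s ^ (1 / q) * (∫⁻ t in s, ENNReal.ofReal (t ^ p) ∂μ) ^ (1 / p) := by
  have h := ENNReal.lintegral_mul_le_Lp_mul_Lq (μ.restrict s) hpq (f := ENNReal.ofReal)
    (g := fun _ => 1) ENNReal.measurable_ofReal.aemeasurable aemeasurable_const
  simp only [Pi.mul_apply, mul_one, ENNReal.one_rpow, lintegral_one,
    Measure.restrict_apply_univ] at h
  rw [mul_comm]
  refine h.trans (mul_le_mul_left (ENNReal.rpow_le_rpow (lintegral_mono fun t =>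
    ENNReal.ofReal_rpow_le hpq.nonneg t) (by simp [hpq.nonneg])) _)

theorem setLIntegral_ofReal_le_add_tail {μ : Measure ℝ} {p q : ℝ}
    (hpq : p.HolderConjugate q) (s : Set ℝ) (A : ℝ) :
    ∫⁻ t in s, ENNReal.ofReal t ∂μ ≤ ENNReal.ofReal A * μ (Iic A) +
      μ (Ioi A) ^ (1 / q) * (∫⁻ t in s, ENNReal.ofReal (t ^ p) ∂μ) ^ (1 / p) := by
  rw [← lintegral_inter_add_sdiff _ s measurableSet_Iic]
  gcongr ?_ + ?_
  · calc ∫⁻ t in s ∩ Iic A, ENNReal.ofReal t ∂μ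
        ≤ ∫⁻ _ in s ∩ Iic A, ENNReal.ofReal A ∂μ :=
          setLIntegral_mono measurable_const fun t ht => ENNReal.ofReal_le_ofReal ht.2
      _ = ENNReal.ofReal A * μ (s ∩ Iic A) := setLIntegral_const _ _
      _ ≤ ENNReal.ofReal A * μ (Iic A) := by gcongr; exact inter_subset_right
  · calc ∫⁻ t in s \ Iic A, ENNReal.ofReal t ∂μ
        ≤ μ (s \ Iic A) ^ (1 / q) *
            (∫⁻ t in s \ Iic A, ENNReal.ofReal (t ^ p) ∂μ) ^ (1 / p) :=
          setLIntegral_ofReal_le_measure_rpow_mul hpq _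
      _ ≤ _ := by
          have := hpq.symm.nonneg
          have := hpq.nonneg
          gcongr
          · exact fun t ht => show A < t from not_le.1 ht.2
          · exact sdiff_subset

theorem exists_setLIntegral_ofReal_le_add_mul (μ : Measure ℝ) [IsFiniteMeasure μ] {p q : ℝ}
    (hpq : p.HolderConjugate q) {δ : ℝ≥0∞} (hδ : δ ≠ 0) :
    ∃ C ≠ ∞, ∀ s : Set ℝ, ∫⁻ t in s, ENNReal.ofReal t ∂μ ≤
      C + δ * (∫⁻ t in s, ENNReal.ofReal (t ^ p) ∂μ) ^ (1 / p) := by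
  have htail : Tendsto (fun A => μ (Ioi A) ^ (1 / q)) atTop (𝓝 0) := by
    have h := ((ENNReal.continuous_rpow_const (y := 1 / q)).tendsto 0).comp
      (tendsto_measure_Ioi_atTop_nhds_zero μ)
    rwa [ENNReal.zero_rpow_of_pos (one_div_pos.2 hpq.symm.pos)] at h
  obtain ⟨A, hA⟩ := (htail.eventually (ge_mem_nhds hδ.bot_lt)).exists
  refine ⟨ENNReal.ofReal A * μ (Iic A), ENNReal.mul_ne_top ENNReal.ofReal_ne_top
    (measure_ne_top μ _), fun s => (setLIntegral_ofReal_le_add_tail hpq s A).trans ?_⟩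
  gcongr

theorem truncated_mean_pow_little_o_truncated_pth_moment_general
    (p : ℝ) (hp : 1 < p)
    (μ : Measure ℝ) [IsProbabilityMeasure μ]
    (hinf : ∫⁻ t in Set.Ici (0 : ℝ), ENNReal.ofReal (t ^ p) ∂μ = ⊤) :
    Tendsto
      (fun x : ℝ =>
        (∫ t in Set.Icc (0 : ℝ) x, t ∂μ) ^ p / ∫ t in Set.Icc (0 : ℝ) x, t ^ p ∂μ)
      atTop (nhds 0) := by
  have hpq : p.HolderConjugate p.conjExponent := .conjExponent hp
  set L := fun x : ℝ => ∫⁻ t in Icc 0 x, ENNReal.ofReal t ∂μ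
  set P := fun x : ℝ => ∫⁻ t in Icc 0 x, ENNReal.ofReal (t ^ p) ∂μ
  have hP : Tendsto P atTop (𝓝 ∞) := hinf ▸ tendsto_setLIntegral_Icc_atTop μ _ 0
  have hLP : Tendsto (fun x => L x / P x ^ (1 / p)) atTop (𝓝 0) := by
    refine ENNReal.tendsto_div_nhds_zero_of_le_add_mul ?_ fun δ hδ => ?_
    · have h := ((ENNReal.continuous_rpow_const (y := 1 / p)).tendsto ∞).comp hP
      rwa [ENNReal.top_rpow_of_pos (one_div_pos.2 hpq.pos)] at h
    · obtain ⟨C, hC, hLC⟩ := exists_setLIntegral_ofReal_le_add_mul μ hpq hδ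
      exact ⟨C, hC, .of_forall fun x => hLC _⟩
  have hLpP : Tendsto (fun x => L x ^ p / P x) atTop (𝓝 0) := by
    have h := ((ENNReal.continuous_rpow_const (y := p)).tendsto 0).comp hLP
    rw [ENNReal.zero_rpow_of_pos hpq.pos] at h
    refine h.congr fun x => ?_
    rw [Function.comp_apply, ENNReal.div_rpow_of_nonneg _ _ hpq.nonneg, ← ENNReal.rpow_mul,
      one_div_mul_cancel hpq.ne_zero, ENNReal.rpow_one]
  refine ((ENNReal.tendsto_toReal ENNReal.zero_ne_top).comp hLpP).congr fun x => ?_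
  have hnonneg {f : ℝ → ℝ} (hf : ∀ t, 0 ≤ t → 0 ≤ f t) : 0 ≤ᵐ[μ.restrict (Icc 0 x)] f :=
    ae_restrict_of_forall_mem measurableSet_Icc fun t ht => hf t ht.1
  rw [Function.comp_apply, ENNReal.toReal_div, ← ENNReal.toReal_rpow,
    integral_eq_lintegral_of_nonneg_ae (hnonneg fun _ => id) (by fun_prop),
    integral_eq_lintegral_of_nonneg_ae (hnonneg fun t ht => Real.rpow_nonneg ht p) (by fun_prop)]

/-- **Lemma 2.** Let `p > 1` and let `μ` be a Borel probability measure on `[0,∞)` with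
`∫ t^p dμ(t) = ∞`. Then `(∫_{[0,x]} t dμ(t))^p = o(∫_{[0,x]} t^p dμ(t))` as `x → ∞`. -/
theorem truncated_mean_pow_little_o_truncated_pth_moment
    (p : ℝ) (hp : 1 < p)
    (μ : Measure ℝ) [IsProbabilityMeasure μ]
    (hsupp : μ (Set.Iio 0) = 0)
    (hinf : ∫⁻ t in Set.Ici (0 : ℝ), ENNReal.ofReal (t ^ p) ∂μ = ⊤) :
    Tendsto
      (fun x : ℝ =>
        (∫ t in Set.Icc (0 : ℝ) x, t ∂μ) ^ p / ∫ t in Set.Icc (0 : ℝ) x, t ^ p ∂μ)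
      atTop (nhds 0) :=
  truncated_mean_pow_little_o_truncated_pth_moment_general p hp μ hinf
end

section
/- (Tilted mean approaches the essential supremum) Let ξ be a real random variable and h ∈ ℝ such that P(ξ ≤ h) = 1 and P(ξ ≥ h − δ) > 0 for every δ > 0. Then for every λ > 0 the random variables e^{λξ} and ξ·e^{λξ} are integrable, and lim_{λ→∞} E[ξ·e^{λξ}] / E[e^{λξ}] = h. (Equivalently: the mean of the Cramér transform ξ^{(λ)}, whose law has density e^{λx}/E[e^{λξ}] with respect to the law of ξ, converges to h as λ → ∞.) -/
/-!
Write `I(λ) = E[e^{λξ}]`. Since `ξ ≤ h` a.s., the gap `h·I(λ) - E[ξ e^{λξ}] = E[(h - ξ) e^{λξ}]`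
is nonnegative, and the elementary bound `(h - δ - x) e^{λx} ≤ e^{λ(h-δ)}/λ` gives
`E[(h - ξ) e^{λξ}] ≤ δ I(λ) + e^{λ(h-δ)}/λ`. On the other hand `I(λ) ≥ e^{λ(h-δ)} P(ξ ≥ h - δ)`,
so the tilted mean lies within `δ + 1/(λ P(ξ ≥ h - δ))` below `h`, which is `< 2δ` for large `λ`.
-/

open MeasureTheory Filter Real Topology

lemma sub_mul_exp_mul_le_exp_mul_div {l : ℝ} (hl : 0 < l) (a x : ℝ) :
    (a - x) * exp (l * x) ≤ exp (l * a) / l := by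
  rw [le_div_iff₀ hl]
  have key : l * (a - x) ≤ exp (l * (a - x)) := by linarith [add_one_le_exp (l * (a - x))]
  calc (a - x) * exp (l * x) * l = l * (a - x) * exp (l * x) := by ring
    _ ≤ exp (l * (a - x)) * exp (l * x) := by gcongr
    _ = exp (l * a) := by rw [← exp_add]; ring_nf

lemma sub_mul_exp_mul_le_add {l : ℝ} (hl : 0 < l) (h δ x : ℝ) :
    (h - x) * exp (l * x) ≤ δ * exp (l * x) + exp (l * (h - δ)) / l := by
  linear_combination sub_mul_exp_mul_le_exp_mul_div hl (h - δ) x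

section

variable {Ω : Type*} [MeasurableSpace Ω] {μ : Measure Ω} [IsFiniteMeasure μ] {ξ : Ω → ℝ}
  {h l : ℝ}

lemma integrable_exp_mul_of_ae_le (hξ : AEMeasurable ξ μ) (hle : ∀ᵐ ω ∂μ, ξ ω ≤ h)
    (hl : 0 ≤ l) : Integrable (fun ω => exp (l * ξ ω)) μ := by
  refine (integrable_const (exp (l * h))).mono' (by fun_prop) ?_
  filter_upwards [hle] with ω hω
  rw [norm_of_nonneg (exp_pos _).le]
  gcongr

lemma integrable_sub_mul_exp_mul_of_ae_le (hξ : AEMeasurable ξ μ) (hle : ∀ᵐ ω ∂μ, ξ ω ≤ h)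
    (hl : 0 < l) : Integrable (fun ω => (h - ξ ω) * exp (l * ξ ω)) μ := by
  refine (integrable_const (exp (l * h) / l)).mono' (by fun_prop) ?_
  filter_upwards [hle] with ω hω
  rw [norm_of_nonneg (mul_nonneg (sub_nonneg.2 hω) (exp_pos _).le)]
  exact sub_mul_exp_mul_le_exp_mul_div hl h (ξ ω)

lemma integrable_mul_exp_mul_of_ae_le (hξ : AEMeasurable ξ μ) (hle : ∀ᵐ ω ∂μ, ξ ω ≤ h)
    (hl : 0 < l) : Integrable (fun ω => ξ ω * exp (l * ξ ω)) μ :=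
  (((integrable_exp_mul_of_ae_le hξ hle hl.le).const_mul h).sub
    (integrable_sub_mul_exp_mul_of_ae_le hξ hle hl)).congr
    (ae_of_all _ fun ω => by simp only [Pi.sub_apply]; ring)

lemma exp_mul_mul_measureReal_le_integral (hint : Integrable (fun ω => exp (l * ξ ω)) μ)
    (hl : 0 ≤ l) (a : ℝ) :
    exp (l * a) * μ.real {ω | a ≤ ξ ω} ≤ ∫ ω, exp (l * ξ ω) ∂μ :=
  calc exp (l * a) * μ.real {ω | a ≤ ξ ω}
      ≤ exp (l * a) * μ.real {ω | exp (l * a) ≤ exp (l * ξ ω)} := by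
        refine mul_le_mul_of_nonneg_left (measureReal_mono fun ω hω => ?_) (exp_pos _).le
        exact exp_le_exp.2 (mul_le_mul_of_nonneg_left hω hl)
    _ ≤ ∫ ω, exp (l * ξ ω) ∂μ :=
        mul_meas_ge_le_integral_of_nonneg (ae_of_all _ fun _ => (exp_pos _).le) hint _

lemma integral_sub_mul_exp_mul_le (hξ : AEMeasurable ξ μ) (hle : ∀ᵐ ω ∂μ, ξ ω ≤ h)
    (hl : 0 < l) (δ : ℝ) :
    ∫ ω, (h - ξ ω) * exp (l * ξ ω) ∂μ
      ≤ δ * ∫ ω, exp (l * ξ ω) ∂μ + μ.real Set.univ * (exp (l * (h - δ)) / l) := by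
  have hint := integrable_exp_mul_of_ae_le hξ hle hl.le
  rw [← integral_const_mul, ← smul_eq_mul (μ.real _), ← integral_const,
    ← integral_add (hint.const_mul δ) (integrable_const _)]
  exact integral_mono (integrable_sub_mul_exp_mul_of_ae_le hξ hle hl)
    ((hint.const_mul δ).add (integrable_const _)) fun ω => sub_mul_exp_mul_le_add hl h δ (ξ ω)

lemma tilted_mean_mem_Icc (hξ : AEMeasurable ξ μ) (hle : ∀ᵐ ω ∂μ, ξ ω ≤ h) (hl : 0 < l)
    {δ : ℝ} (hp : 0 < μ.real {ω | h - δ ≤ ξ ω}) :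
    (∫ ω, ξ ω * exp (l * ξ ω) ∂μ) / (∫ ω, exp (l * ξ ω) ∂μ) ∈
      Set.Icc (h - δ - μ.real Set.univ / (l * μ.real {ω | h - δ ≤ ξ ω})) h := by
  set p := μ.real {ω | h - δ ≤ ξ ω}
  set I := ∫ ω, exp (l * ξ ω) ∂μ
  set G := ∫ ω, (h - ξ ω) * exp (l * ξ ω) ∂μ
  have hint := integrable_exp_mul_of_ae_le hξ hle hl.le
  have hIlow : exp (l * (h - δ)) * p ≤ I := exp_mul_mul_measureReal_le_integral hint hl.le _
  have hIpos : 0 < I := lt_of_lt_of_le (by positivity) hIlow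
  have hmean : (∫ ω, ξ ω * exp (l * ξ ω) ∂μ) / I = h - G / I := by
    have hJ : ∫ ω, ξ ω * exp (l * ξ ω) ∂μ = h * I - G := by
      rw [← integral_const_mul,
        ← integral_sub (hint.const_mul h) (integrable_sub_mul_exp_mul_of_ae_le hξ hle hl)]
      congr 1; funext ω; ring
    rw [hJ]; field_simp
  have hG0 : 0 ≤ G := integral_nonneg_of_ae <| by
    filter_upwards [hle] with ω hω
    exact mul_nonneg (sub_nonneg.2 hω) (exp_pos _).le
  have hGle : G ≤ (δ + μ.real Set.univ / (l * p)) * I :=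
    calc G ≤ δ * I + μ.real Set.univ * (exp (l * (h - δ)) / l) :=
          integral_sub_mul_exp_mul_le hξ hle hl δ
      _ = δ * I + μ.real Set.univ / (l * p) * (exp (l * (h - δ)) * p) := by
          field_simp
      _ ≤ (δ + μ.real Set.univ / (l * p)) * I := by
          rw [add_mul]; gcongr
  have hratio : G / I ≤ δ + μ.real Set.univ / (l * p) := (div_le_iff₀ hIpos).2 hGle
  rw [hmean, Set.mem_Icc]
  exact ⟨by linarith, sub_le_self _ (div_nonneg hG0 hIpos.le)⟩

theorem tendsto_tilted_mean_of_ae_le (hξ : AEMeasurable ξ μ) (hle : ∀ᵐ ω ∂μ, ξ ω ≤ h)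
    (hδ : ∀ δ : ℝ, 0 < δ → 0 < μ {ω | h - δ ≤ ξ ω}) :
    Tendsto (fun l : ℝ => (∫ ω, ξ ω * exp (l * ξ ω) ∂μ) / ∫ ω, exp (l * ξ ω) ∂μ)
      atTop (𝓝 h) := by
  have hp : ∀ δ : ℝ, 0 < δ → 0 < μ.real {ω | h - δ ≤ ξ ω} := fun δ hδ0 =>
    ENNReal.toReal_pos (hδ δ hδ0).ne' (measure_ne_top _ _)
  refine tendsto_order.2 ⟨fun a ha => ?_, fun b hb => ?_⟩
  · set δ := (h - a) / 2 with hδdef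
    have hδ0 : 0 < δ := by linarith
    have hsmall : Tendsto (fun l => μ.real Set.univ / (l * μ.real {ω | h - δ ≤ ξ ω}))
        atTop (𝓝 0) :=
      tendsto_const_nhds.div_atTop (tendsto_id.atTop_mul_const (hp δ hδ0))
    filter_upwards [eventually_gt_atTop 0, hsmall.eventually (gt_mem_nhds hδ0)] with l hl hsm
    have := (tilted_mean_mem_Icc hξ hle hl (hp δ hδ0)).1
    linarith
  · filter_upwards [eventually_gt_atTop 0] with l hl
    exact (tilted_mean_mem_Icc hξ hle hl (hp 1 one_pos)).2.trans_lt hb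

end

/-- **Tilted mean approaches the essential supremum.** If `P(ξ ≤ h) = 1` and
`P(ξ ≥ h − δ) > 0` for every `δ > 0`, then for every `λ > 0` the variables `e^{λξ}` and
`ξ·e^{λξ}` are integrable, and `E[ξ·e^{λξ}]/E[e^{λξ}] → h` as `λ → ∞`. -/
theorem tilted_mean_tendsto_esssup
    {Ω : Type*} [MeasurableSpace Ω] (P : Measure Ω) [IsProbabilityMeasure P]
    (ξ : Ω → ℝ) (hmeas : Measurable ξ) (h : ℝ)
    (hle : ∀ᵐ ω ∂P, ξ ω ≤ h)
    (hδ : ∀ δ : ℝ, 0 < δ → 0 < P {ω | h - δ ≤ ξ ω}) :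
    (∀ l : ℝ, 0 < l →
        Integrable (fun ω => Real.exp (l * ξ ω)) P ∧
          Integrable (fun ω => ξ ω * Real.exp (l * ξ ω)) P)
      ∧ Tendsto
          (fun l : ℝ =>
            (∫ ω, ξ ω * Real.exp (l * ξ ω) ∂P) / ∫ ω, Real.exp (l * ξ ω) ∂P)
          atTop (nhds h) :=
  ⟨fun _ hl => ⟨integrable_exp_mul_of_ae_le hmeas.aemeasurable hle hl.le,
      integrable_mul_exp_mul_of_ae_le hmeas.aemeasurable hle hl⟩,
    tendsto_tilted_mean_of_ae_le hmeas.aemeasurable hle hδ⟩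
end

section
/- (Crossing points of the two-point line with the curve x₁ = z·x₂^{1/p}) Let f(q) < z < 1. (i) If a < 0, then there is exactly one t ∈ (0,1) with f(t) = z, and it satisfies t > q. (ii) If a > 0, then there are exactly two points t_−, t_+ with 0 < t_− < t_+ < 1 and f(t_−) = f(t_+) = z, and they satisfy t_− < q < t_+. (iii) If a = 0, then t = z^{p/(p−1)} is the unique solution of f(t) = z in (0,1), and it satisfies t > q. -/
open Real Set

/-!
Write `f = N / D^{1/p}` with `N t = a + t(b-a)` and `D t = |a|^p + t(b^p-|a|^p) > 0`. Where `N`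
has the sign of `z`, `f t = z` means `G t = 0` for the gap `G t = |N t|^p - |z|^p D t`, whose sign
is that of `|f t| - |z|`. Since `|x|^p` is strictly convex and `N` is injective affine, `G` is
strictly convex, so on either side of a point where it is negative it has at most one zero, and
exactly one if it turns positive further out. The signs of `G` are fixed by
`|f 0| = f 1 = 1 > |z|`, by `f = 0` at the zero of `N`, and by `f q < z`.
For `a = 0`, `f t = t^{1-1/p}` explicitly.
-/

/-- The function `f(t) = (a + t(b−a)) / (|a|^p + t(b^p − |a|^p))^{1/p}`, giving the value of
the self-normalized ratio along the segment joining `(a,|a|^p)` to `(b,b^p)`.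
(With Lean's conventions `0/0 = 0`, this also gives `f(0) = a/|a|` for `a ≠ 0` and
`f(0) = 0` for `a = 0`.) -/
noncomputable def crossFn (p a b t : ℝ) : ℝ :=
  (a + t * (b - a)) / (|a| ^ p + t * (b ^ p - |a| ^ p)) ^ (1 / p)

theorem strictConvexOn_abs_rpow {p : ℝ} (hp : 1 < p) :
    StrictConvexOn ℝ univ fun x : ℝ => |x| ^ p := by
  refine ⟨convex_univ, fun x _ y _ hxy α β hα hβ hαβ => ?_⟩
  simp only [smul_eq_mul]
  by_cases habs : |x| = |y|
  · have hy : y = -x := by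
      rcases abs_eq_abs.1 habs with h | h
      · exact absurd h hxy
      · linarith
    have hx : 0 < |x| := abs_pos.2 fun h => hxy (by rw [hy, h, neg_zero])
    have hshort : |α * x + β * y| < |x| :=
      calc |α * x + β * y| = |α - β| * |x| := by rw [hy, ← abs_mul]; ring_nf
        _ < 1 * |x| := by
          gcongr
          exact abs_sub_lt_iff.2 ⟨by linarith, by linarith⟩
        _ = |x| := one_mul _
    calc |α * x + β * y| ^ p < |x| ^ p := rpow_lt_rpow (abs_nonneg _) hshort (by linarith)
      _ = α * |x| ^ p + β * |y| ^ p := by rw [← habs, ← add_mul, hαβ, one_mul]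
  · calc |α * x + β * y| ^ p ≤ (α * |x| + β * |y|) ^ p := by
          gcongr
          calc |α * x + β * y| ≤ |α * x| + |β * y| := abs_add_le _ _
            _ = α * |x| + β * |y| := by rw [abs_mul, abs_mul, abs_of_pos hα, abs_of_pos hβ]
      _ < α * |x| ^ p + β * |y| ^ p := by
          simpa only [smul_eq_mul] using
            (strictConvexOn_rpow hp).2 (abs_nonneg x) (abs_nonneg y) habs hα hβ hαβ

section RootsOfStrictConvex

variable {s : Set ℝ} {g : ℝ → ℝ} {u v : ℝ}

theorem StrictConvexOn.neg_of_nonpos_of_nonpos (hg : StrictConvexOn ℝ s g) {x y w : ℝ}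
    (hx : x ∈ s) (hw : w ∈ s) (hy : y ∈ Ioo x w) (hgx : g x ≤ 0) (hgw : g w ≤ 0) : g y < 0 :=
  have hxw : x < w := hy.1.trans hy.2
  (hg.lt_on_openSegment hx hw hxw.ne (by rwa [openSegment_eq_Ioo hxw])).trans_le (max_le hgx hgw)

theorem StrictConvexOn.exists_zero_of_neg_of_pos (hg : StrictConvexOn ℝ s g)
    (hc : ContinuousOn g (Icc u v)) (hu : u ∈ s) (hv : v ∈ s) (huv : u < v)
    (hgu : g u < 0) (hgv : 0 < g v) :
    ∃ t ∈ Ioo u v, ∀ x ∈ s, u ≤ x → (g x = 0 ↔ x = t) ∧ (g x < 0 ↔ x < t) := by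
  obtain ⟨t, ht, hgt⟩ := intermediate_value_Ioo huv.le hc ⟨hgu, hgv⟩
  have hts : t ∈ s := hg.1.ordConnected.out hu hv (Ioo_subset_Icc_self ht)
  have hneg : ∀ x ∈ s, u ≤ x → x < t → g x < 0 := by
    intro x hx hux hxt
    rcases hux.eq_or_lt with rfl | hux
    · exact hgu
    · exact hg.neg_of_nonpos_of_nonpos hu hts ⟨hux, hxt⟩ hgu.le hgt.le
  have hpos : ∀ x ∈ s, t < x → 0 < g x := fun x hx htx => by
    by_contra! hgx
    exact (hg.neg_of_nonpos_of_nonpos hu hx ⟨ht.1, htx⟩ hgu.le hgx).ne hgt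
  refine ⟨t, ht, fun x hx hux => ?_⟩
  rcases lt_trichotomy x t with hxt | rfl | htx
  · exact ⟨iff_of_false (hneg x hx hux hxt).ne hxt.ne, iff_of_true (hneg x hx hux hxt) hxt⟩
  · exact ⟨iff_of_true hgt rfl, iff_of_false hgt.not_lt (lt_irrefl x)⟩
  · have hgx := hpos x hx htx
    exact ⟨iff_of_false hgx.ne' htx.ne', iff_of_false hgx.asymm htx.asymm⟩

theorem StrictConvexOn.exists_zero_of_pos_of_neg (hg : StrictConvexOn ℝ s g)
    (hc : ContinuousOn g (Icc u v)) (hu : u ∈ s) (hv : v ∈ s) (huv : u < v)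
    (hgu : 0 < g u) (hgv : g v < 0) :
    ∃ t ∈ Ioo u v, ∀ x ∈ s, x ≤ v → (g x = 0 ↔ x = t) ∧ (0 < g x ↔ x < t) := by
  obtain ⟨t, ht, hgt⟩ := intermediate_value_Ioo' huv.le hc ⟨hgv, hgu⟩
  have hts : t ∈ s := hg.1.ordConnected.out hu hv (Ioo_subset_Icc_self ht)
  have hneg : ∀ x ∈ s, x ≤ v → t < x → g x < 0 := by
    intro x hx hxv htx
    rcases hxv.eq_or_lt with rfl | hxv
    · exact hgv
    · exact hg.neg_of_nonpos_of_nonpos hts hv ⟨htx, hxv⟩ hgt.le hgv.le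
  have hpos : ∀ x ∈ s, x < t → 0 < g x := fun x hx hxt => by
    by_contra! hgx
    exact (hg.neg_of_nonpos_of_nonpos hx hv ⟨hxt, ht.2⟩ hgx hgv.le).ne hgt
  refine ⟨t, ht, fun x hx hxv => ?_⟩
  rcases lt_trichotomy x t with hxt | rfl | htx
  · exact ⟨iff_of_false (hpos x hx hxt).ne' hxt.ne, iff_of_true (hpos x hx hxt) hxt⟩
  · exact ⟨iff_of_true hgt rfl, iff_of_false hgt.not_gt (lt_irrefl x)⟩
  · have hgx := hneg x hx hxv htx
    exact ⟨iff_of_false hgx.ne htx.ne', iff_of_false hgx.asymm htx.asymm⟩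

end RootsOfStrictConvex

section CrossingPoints

variable {p a b q z t : ℝ}

def crossNum (a b t : ℝ) : ℝ := a + t * (b - a)

noncomputable def crossDen (p a b t : ℝ) : ℝ := |a| ^ p + t * (b ^ p - |a| ^ p)

noncomputable def crossGap (p a b z t : ℝ) : ℝ :=
  |crossNum a b t| ^ p - |z| ^ p * crossDen p a b t

def crossPoints (p a b z : ℝ) : Set ℝ := {s ∈ Ioo (0 : ℝ) 1 | crossFn p a b s = z}

theorem crossFn_eq_div : crossFn p a b t = crossNum a b t / crossDen p a b t ^ (1 / p) := rfl

theorem crossNum_neg_iff (hab : a < b) : crossNum a b t < 0 ↔ t < -a / (b - a) := by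
  rw [crossNum, lt_div_iff₀ (sub_pos.2 hab)]
  constructor <;> intro h <;> linarith

theorem crossNum_pos_iff (hab : a < b) : 0 < crossNum a b t ↔ -a / (b - a) < t := by
  rw [crossNum, div_lt_iff₀ (sub_pos.2 hab)]
  constructor <;> intro h <;> linarith

theorem crossNum_eq_zero_iff (hab : a < b) : crossNum a b t = 0 ↔ t = -a / (b - a) := by
  rw [crossNum, eq_div_iff (sub_pos.2 hab).ne']
  constructor <;> intro h <;> linarith

theorem neg_div_sub_mem_Ioo (ha : a < 0) (hb : 0 < b) : -a / (b - a) ∈ Ioo (0 : ℝ) 1 :=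
  ⟨div_pos (neg_pos.2 ha) (by linarith), (div_lt_one (by linarith)).2 (by linarith)⟩

theorem crossDen_pos (ha : a ≠ 0) (hb : 0 < b) (ht : t ∈ Icc (0 : ℝ) 1) :
    0 < crossDen p a b t := by
  have hsplit : crossDen p a b t = (1 - t) * |a| ^ p + t * b ^ p := by rw [crossDen]; ring
  have hbp : 0 < b ^ p := rpow_pos_of_pos hb p
  rw [hsplit]
  rcases ht.2.lt_or_eq with ht1 | rfl
  · have : 0 < |a| ^ p := rpow_pos_of_pos (abs_pos.2 ha) p
    exact add_pos_of_pos_of_nonneg (mul_pos (sub_pos.2 ht1) this) (mul_nonneg ht.1 hbp.le)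
  · simpa using hbp

theorem crossFn_one (hp : 0 < p) (hb : 0 < b) : crossFn p a b 1 = 1 := by
  rw [crossFn, one_mul, one_mul, add_sub_cancel, add_sub_cancel, one_div,
    rpow_rpow_inv hb.le hp.ne', div_self hb.ne']

theorem abs_crossFn_zero (hp : 0 < p) (ha : a ≠ 0) : |crossFn p a b 0| = 1 := by
  rw [crossFn, zero_mul, zero_mul, add_zero, add_zero, one_div,
    rpow_rpow_inv (abs_nonneg a) hp.ne', abs_div, abs_abs, div_self (abs_ne_zero.2 ha)]

theorem crossGap_eq_mul (hp : 0 < p) (hD : 0 < crossDen p a b t) :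
    crossGap p a b z t = crossDen p a b t * (|crossFn p a b t| ^ p - |z| ^ p) := by
  have hroot : (crossDen p a b t ^ (1 / p)) ^ p = crossDen p a b t := by
    rw [one_div, rpow_inv_rpow hD.le hp.ne']
  rw [crossGap, crossFn_eq_div, abs_div, abs_of_pos (rpow_pos_of_pos hD _),
    div_rpow (abs_nonneg _) (rpow_pos_of_pos hD _).le, hroot]
  field_simp

theorem crossGap_neg_iff (hp : 0 < p) (hD : 0 < crossDen p a b t) :
    crossGap p a b z t < 0 ↔ |crossFn p a b t| < |z| := by
  rw [crossGap_eq_mul hp hD, ← neg_pos, ← mul_neg, mul_pos_iff_of_pos_left hD, neg_pos, sub_neg,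
    rpow_lt_rpow_iff (abs_nonneg _) (abs_nonneg _) hp]

theorem crossGap_pos_iff (hp : 0 < p) (hD : 0 < crossDen p a b t) :
    0 < crossGap p a b z t ↔ |z| < |crossFn p a b t| := by
  rw [crossGap_eq_mul hp hD, mul_pos_iff_of_pos_left hD, sub_pos,
    rpow_lt_rpow_iff (abs_nonneg _) (abs_nonneg _) hp]

theorem crossGap_eq_zero_iff (hp : 0 < p) (hD : 0 < crossDen p a b t) :
    crossGap p a b z t = 0 ↔ |crossFn p a b t| = |z| := by
  rw [crossGap_eq_mul hp hD, mul_eq_zero, or_iff_right hD.ne', sub_eq_zero,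
    rpow_left_inj (abs_nonneg _) (abs_nonneg _) hp.ne']

theorem crossFn_pos_iff (hD : 0 < crossDen p a b t) : 0 < crossFn p a b t ↔ 0 < crossNum a b t :=
  div_pos_iff_of_pos_right (rpow_pos_of_pos hD _)

theorem crossFn_neg_iff (hD : 0 < crossDen p a b t) : crossFn p a b t < 0 ↔ crossNum a b t < 0 := by
  rw [crossFn_eq_div, div_lt_iff₀ (rpow_pos_of_pos hD _), zero_mul]

theorem crossFn_eq_zero_iff (hD : 0 < crossDen p a b t) :
    crossFn p a b t = 0 ↔ crossNum a b t = 0 := by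
  rw [crossFn_eq_div, div_eq_zero_iff, or_iff_left (rpow_pos_of_pos hD _).ne']

theorem crossFn_eq_iff_of_pos (hp : 0 < p) (hD : 0 < crossDen p a b t) (hz : 0 < z) :
    crossFn p a b t = z ↔ 0 < crossNum a b t ∧ crossGap p a b z t = 0 := by
  rw [← crossFn_pos_iff hD, crossGap_eq_zero_iff hp hD]
  constructor
  · rintro rfl
    exact ⟨hz, rfl⟩
  · rintro ⟨hf, habs⟩
    rwa [abs_of_pos hf, abs_of_pos hz] at habs

theorem crossFn_eq_iff_of_neg (hp : 0 < p) (hD : 0 < crossDen p a b t) (hz : z < 0) :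
    crossFn p a b t = z ↔ crossNum a b t < 0 ∧ crossGap p a b z t = 0 := by
  rw [← crossFn_neg_iff hD, crossGap_eq_zero_iff hp hD]
  constructor
  · rintro rfl
    exact ⟨hz, rfl⟩
  · rintro ⟨hf, habs⟩
    rwa [abs_of_neg hf, abs_of_neg hz, neg_inj] at habs

theorem strictConvexOn_crossGap (hp : 1 < p) (hab : a ≠ b) :
    StrictConvexOn ℝ univ (crossGap p a b z) := by
  refine ⟨convex_univ, fun x _ y _ hxy α β hα hβ hαβ => ?_⟩
  have hN : crossNum a b x ≠ crossNum a b y := fun h =>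
    hxy (mul_right_cancel₀ (sub_ne_zero.2 hab.symm) (by simp only [crossNum] at h; linarith))
  have key := (strictConvexOn_abs_rpow hp).2 (mem_univ _) (mem_univ _) hN hα hβ hαβ
  have hNcomb : crossNum a b (α * x + β * y) = α * crossNum a b x + β * crossNum a b y := by
    simp only [crossNum]; linear_combination (-a) * hαβ
  have hDcomb : crossDen p a b (α * x + β * y) = α * crossDen p a b x + β * crossDen p a b y := by
    simp only [crossDen]; linear_combination (-|a| ^ p) * hαβ
  simp only [crossGap, smul_eq_mul] at key ⊢
  rw [hNcomb, hDcomb]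
  linarith

theorem continuous_crossGap (hp : 0 < p) : Continuous (crossGap p a b z) := by
  unfold crossGap crossNum crossDen
  exact ((continuous_abs.comp (by fun_prop)).rpow_const fun _ => Or.inr hp.le).sub (by fun_prop)

theorem exists_crossPoints_eq_singleton_of_neg_of_neg (hp : 1 < p) (hab : a < b) (ha : a < 0)
    (hb : 0 < b) (hq : q ∈ Ioo (0 : ℝ) 1) (hqz : crossFn p a b q < z) (hz : z < 0) :
    ∃ t, crossPoints p a b z = {t} ∧ q < t := by
  set r := -a / (b - a)
  have hp0 : 0 < p := by linarith
  have hr : r ∈ Ioo (0 : ℝ) 1 := neg_div_sub_mem_Ioo ha hb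
  have hD : ∀ s ∈ Icc (0 : ℝ) 1, 0 < crossDen p a b s := fun s hs => crossDen_pos ha.ne hb hs
  have hDq := hD q (Ioo_subset_Icc_self hq)
  have hDr := hD r (Ioo_subset_Icc_self hr)
  have hqr : q < r := (crossNum_neg_iff hab).1 ((crossFn_neg_iff hDq).1 (hqz.trans hz))
  have hgq : 0 < crossGap p a b z q := by
    rw [crossGap_pos_iff hp0 hDq, abs_of_neg hz, abs_of_neg (hqz.trans hz)]
    linarith
  have hgr : crossGap p a b z r < 0 := by
    rw [crossGap_neg_iff hp0 hDr, (crossFn_eq_zero_iff hDr).2 ((crossNum_eq_zero_iff hab).2 rfl),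
      abs_zero]
    exact abs_pos.2 hz.ne
  obtain ⟨t, ht, hroot⟩ := (strictConvexOn_crossGap hp hab.ne).exists_zero_of_pos_of_neg
    (continuous_crossGap hp0).continuousOn (mem_univ q) (mem_univ r) hqr hgq hgr
  have htI : t ∈ Ioo (0 : ℝ) 1 := ⟨hq.1.trans ht.1, ht.2.trans hr.2⟩
  refine ⟨t, Set.ext fun s => ⟨fun ⟨hs, hfs⟩ => ?_, fun (hst : s = t) => ?_⟩, ht.1⟩
  · obtain ⟨hNs, hgs⟩ := (crossFn_eq_iff_of_neg hp0 (hD s (Ioo_subset_Icc_self hs)) hz).1 hfs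
    exact (hroot s (mem_univ s) ((crossNum_neg_iff hab).1 hNs).le).1.1 hgs
  · subst hst
    exact ⟨htI, (crossFn_eq_iff_of_neg hp0 (hD s (Ioo_subset_Icc_self htI)) hz).2
      ⟨(crossNum_neg_iff hab).2 ht.2, (hroot s (mem_univ s) ht.2.le).1.2 rfl⟩⟩

theorem exists_crossPoints_eq_singleton_of_neg_of_eq_zero (hab : a < b) (ha : a < 0) (hb : 0 < b)
    (hq : q ∈ Ioo (0 : ℝ) 1) (hqz : crossFn p a b q < 0) :
    ∃ t, crossPoints p a b 0 = {t} ∧ q < t := by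
  have hD : ∀ s ∈ Icc (0 : ℝ) 1, 0 < crossDen p a b s := fun s hs => crossDen_pos ha.ne hb hs
  have hr : -a / (b - a) ∈ Ioo (0 : ℝ) 1 := neg_div_sub_mem_Ioo ha hb
  refine ⟨-a / (b - a), Set.ext fun s => ⟨fun ⟨hs, hfs⟩ => ?_, fun (hst : s = _) => ?_⟩,
    (crossNum_neg_iff hab).1 ((crossFn_neg_iff (hD q (Ioo_subset_Icc_self hq))).1 hqz)⟩
  · exact (crossNum_eq_zero_iff hab).1 ((crossFn_eq_zero_iff (hD s (Ioo_subset_Icc_self hs))).1 hfs)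
  · subst hst
    exact ⟨hr, (crossFn_eq_zero_iff (hD _ (Ioo_subset_Icc_self hr))).2
      ((crossNum_eq_zero_iff hab).2 rfl)⟩

theorem exists_crossPoints_eq_singleton_of_neg_of_pos (hp : 1 < p) (hab : a < b) (ha : a < 0)
    (hb : 0 < b) (hq : q ∈ Ioo (0 : ℝ) 1) (hqz : crossFn p a b q < z) (hz : 0 < z) (hz1 : z < 1) :
    ∃ t, crossPoints p a b z = {t} ∧ q < t := by
  set r := -a / (b - a)
  have hp0 : 0 < p := by linarith
  have hr : r ∈ Ioo (0 : ℝ) 1 := neg_div_sub_mem_Ioo ha hb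
  have hD : ∀ s ∈ Icc (0 : ℝ) 1, 0 < crossDen p a b s := fun s hs => crossDen_pos ha.ne hb hs
  have hDr := hD r (Ioo_subset_Icc_self hr)
  have hgr : crossGap p a b z r < 0 := by
    rw [crossGap_neg_iff hp0 hDr, (crossFn_eq_zero_iff hDr).2 ((crossNum_eq_zero_iff hab).2 rfl),
      abs_zero]
    exact abs_pos.2 hz.ne'
  have hg1 : 0 < crossGap p a b z 1 := by
    rw [crossGap_pos_iff hp0 (hD 1 (right_mem_Icc.2 zero_le_one)), crossFn_one hp0 hb, abs_one,
      abs_of_pos hz]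
    exact hz1
  obtain ⟨t, ht, hroot⟩ := (strictConvexOn_crossGap hp hab.ne).exists_zero_of_neg_of_pos
    (continuous_crossGap hp0).continuousOn (mem_univ r) (mem_univ 1) hr.2 hgr hg1
  have htI : t ∈ Ioo (0 : ℝ) 1 := ⟨hr.1.trans ht.1, ht.2⟩
  have hqt : q < t := by
    rcases le_or_gt q r with hqr | hrq
    · exact hqr.trans_lt ht.1
    · have hDq := hD q (Ioo_subset_Icc_self hq)
      have hfq : 0 < crossFn p a b q := (crossFn_pos_iff hDq).2 ((crossNum_pos_iff hab).2 hrq)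
      refine (hroot q (mem_univ q) hrq.le).2.1 ?_
      rw [crossGap_neg_iff hp0 hDq, abs_of_pos hfq, abs_of_pos hz]
      exact hqz
  refine ⟨t, Set.ext fun s => ⟨fun ⟨hs, hfs⟩ => ?_, fun (hst : s = t) => ?_⟩, hqt⟩
  · obtain ⟨hNs, hgs⟩ := (crossFn_eq_iff_of_pos hp0 (hD s (Ioo_subset_Icc_self hs)) hz).1 hfs
    exact (hroot s (mem_univ s) ((crossNum_pos_iff hab).1 hNs).le).1.1 hgs
  · subst hst
    exact ⟨htI, (crossFn_eq_iff_of_pos hp0 (hD s (Ioo_subset_Icc_self htI)) hz).2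
      ⟨(crossNum_pos_iff hab).2 ht.1, (hroot s (mem_univ s) ht.1.le).1.2 rfl⟩⟩

theorem exists_crossPoints_eq_pair_of_pos (hp : 1 < p) (hab : a < b) (ha : 0 < a) (hb : 0 < b)
    (hq : q ∈ Ioo (0 : ℝ) 1) (hqz : crossFn p a b q < z) (hz1 : z < 1) :
    ∃ t₁ t₂, t₁ < t₂ ∧ crossPoints p a b z = {t₁, t₂} ∧ t₁ < q ∧ q < t₂ := by
  have hp0 : 0 < p := by linarith
  have hD : ∀ s ∈ Icc (0 : ℝ) 1, 0 < crossDen p a b s := fun s hs => crossDen_pos ha.ne' hb hs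
  have hN : ∀ s ∈ Icc (0 : ℝ) 1, 0 < crossNum a b s := fun s hs =>
    (crossNum_pos_iff hab).2 ((div_neg_of_neg_of_pos (neg_neg_of_pos ha) (sub_pos.2 hab)).trans_le
      hs.1)
  have hDq := hD q (Ioo_subset_Icc_self hq)
  have hfq : 0 < crossFn p a b q := (crossFn_pos_iff hDq).2 (hN q (Ioo_subset_Icc_self hq))
  have hz : 0 < z := hfq.trans hqz
  have hg0 : 0 < crossGap p a b z 0 := by
    rw [crossGap_pos_iff hp0 (hD 0 (left_mem_Icc.2 zero_le_one)), abs_crossFn_zero hp0 ha.ne',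
      abs_of_pos hz]
    exact hz1
  have hg1 : 0 < crossGap p a b z 1 := by
    rw [crossGap_pos_iff hp0 (hD 1 (right_mem_Icc.2 zero_le_one)), crossFn_one hp0 hb, abs_one,
      abs_of_pos hz]
    exact hz1
  have hgq : crossGap p a b z q < 0 := by
    rw [crossGap_neg_iff hp0 hDq, abs_of_pos hfq, abs_of_pos hz]
    exact hqz
  have hg := strictConvexOn_crossGap (z := z) hp hab.ne
  obtain ⟨t₁, ht₁, hroot₁⟩ := hg.exists_zero_of_pos_of_neg
    (continuous_crossGap hp0).continuousOn (mem_univ 0) (mem_univ q) hq.1 hg0 hgq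
  obtain ⟨t₂, ht₂, hroot₂⟩ := hg.exists_zero_of_neg_of_pos
    (continuous_crossGap hp0).continuousOn (mem_univ q) (mem_univ 1) hq.2 hgq hg1
  have hsol : ∀ s ∈ Ioo (0 : ℝ) 1, crossFn p a b s = z ↔ crossGap p a b z s = 0 := fun s hs => by
    rw [crossFn_eq_iff_of_pos hp0 (hD s (Ioo_subset_Icc_self hs)) hz,
      and_iff_right (hN s (Ioo_subset_Icc_self hs))]
  refine ⟨t₁, t₂, ht₁.2.trans ht₂.1, Set.ext fun s => ⟨fun ⟨hs, hfs⟩ => ?_, fun hst => ?_⟩,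
    ht₁.2, ht₂.1⟩
  · have hgs := (hsol s hs).1 hfs
    rcases le_total s q with hsq | hqs
    · exact Or.inl ((hroot₁ s (mem_univ s) hsq).1.1 hgs)
    · exact Or.inr ((hroot₂ s (mem_univ s) hqs).1.1 hgs)
  · rcases hst with rfl | (rfl : s = t₂)
    · have hs : s ∈ Ioo (0 : ℝ) 1 := ⟨ht₁.1, ht₁.2.trans hq.2⟩
      exact ⟨hs, (hsol s hs).2 ((hroot₁ s (mem_univ s) ht₁.2.le).1.2 rfl)⟩
    · have hs : s ∈ Ioo (0 : ℝ) 1 := ⟨hq.1.trans ht₂.1, ht₂.2⟩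
      exact ⟨hs, (hsol s hs).2 ((hroot₂ s (mem_univ s) ht₂.1.le).1.2 rfl)⟩

theorem crossFn_zero_left (hp : 1 < p) (hb : 0 < b) (ht : 0 < t) :
    crossFn p 0 b t = t ^ (p / (p - 1))⁻¹ := by
  have hp0 : 0 < p := by linarith
  simp only [crossFn, abs_zero, zero_rpow hp0.ne', zero_add, sub_zero]
  rw [mul_rpow ht.le (rpow_nonneg hb.le _), ← rpow_mul hb.le, mul_one_div_cancel hp0.ne', rpow_one,
    mul_div_mul_right _ _ hb.ne', inv_div, show (p - 1) / p = 1 - 1 / p by field_simp,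
    rpow_sub ht, rpow_one]

theorem crossPoints_zero_left_eq_singleton (hp : 1 < p) (hb : 0 < b) (hq : q ∈ Ioo (0 : ℝ) 1)
    (hqz : crossFn p 0 b q < z) (hz1 : z < 1) :
    crossPoints p 0 b z = {z ^ (p / (p - 1))} ∧ q < z ^ (p / (p - 1)) := by
  have he : 0 < p / (p - 1) := div_pos (by linarith) (by linarith)
  rw [crossFn_zero_left hp hb hq.1] at hqz
  have hz : 0 < z := (rpow_pos_of_pos hq.1 _).trans hqz
  have hroot : z ^ (p / (p - 1)) ∈ Ioo (0 : ℝ) 1 := ⟨rpow_pos_of_pos hz _, rpow_lt_one hz.le hz1 he⟩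
  refine ⟨Set.ext fun s => ⟨fun ⟨hs, hfs⟩ => ?_, fun (hst : s = _) => ?_⟩,
    (rpow_inv_lt_iff_of_pos hq.1.le hz.le he).1 hqz⟩
  · rw [crossFn_zero_left hp hb hs.1] at hfs
    exact (rpow_inv_eq hs.1.le hz.le he.ne').1 hfs
  · subst hst
    exact ⟨hroot, by rw [crossFn_zero_left hp hb hroot.1, rpow_rpow_inv hz.le he.ne']⟩

end CrossingPoints

/-- **Crossing points of the two-point line with the curve `x₁ = z·x₂^{1/p}`.**
Let `f(q) < z < 1`. (i) If `a < 0` there is exactly one `t ∈ (0,1)` with `f(t) = z`, and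
`t > q`. (ii) If `a > 0` there are exactly two such points `t₋ < t₊`, with `t₋ < q < t₊`.
(iii) If `a = 0` then `t = z^{p/(p−1)}` is the unique solution in `(0,1)`, and `t > q`. -/
theorem crossing_points_two_point_case
    (p a b q z : ℝ) (hp : 1 < p) (hab : a < b) (hb : 0 < b)
    (hq : q ∈ Set.Ioo (0 : ℝ) 1)
    (hz1 : crossFn p a b q < z) (hz2 : z < 1) :
    (a < 0 → ∃ t : ℝ,
        {s ∈ Set.Ioo (0 : ℝ) 1 | crossFn p a b s = z} = {t} ∧ q < t)
      ∧ (0 < a → ∃ t₁ t₂ : ℝ, t₁ < t₂ ∧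
          {s ∈ Set.Ioo (0 : ℝ) 1 | crossFn p a b s = z} = {t₁, t₂} ∧ t₁ < q ∧ q < t₂)
      ∧ (a = 0 →
          {s ∈ Set.Ioo (0 : ℝ) 1 | crossFn p a b s = z} = {z ^ (p / (p - 1))}
            ∧ q < z ^ (p / (p - 1))) := by
  refine ⟨fun ha => ?_, fun ha => exists_crossPoints_eq_pair_of_pos hp hab ha hb hq hz1 hz2,
    fun ha => ?_⟩
  · rcases lt_trichotomy z 0 with hz | rfl | hz
    · exact exists_crossPoints_eq_singleton_of_neg_of_neg hp hab ha hb hq hz1 hz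
    · exact exists_crossPoints_eq_singleton_of_neg_of_eq_zero hab ha hb hq hz1
    · exact exists_crossPoints_eq_singleton_of_neg_of_pos hp hab ha hb hq hz1 hz hz2
  · subst ha
    exact crossPoints_zero_left_eq_singleton hp hb hq hz1 hz2
end

section
/- (Case z > 1 in the general self-normalized setting) Let u : ℝ → [0,∞) be convex with u(0) = 0 and such that x ↦ u(x) and x ↦ u(−x) are strictly increasing on [0,∞). Then for every z > 1 and every n ≥ 1 the event {W_n ≥ z} equals {X₁ = ⋯ = X_n = 0}; consequently P(W_n ≥ z) = P(X = 0)^n, n^{−1}·ln P(W_n ≥ z) = ln P(X = 0) ∈ [−∞, 0] for each n, and lim_{n→∞} n^{−1}·ln P(W_n ≥ z) = ln P(X = 0). -/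
open MeasureTheory ProbabilityTheory Real Set Filter
open scoped ENNReal

/-!
Jensen's inequality for the convex `u` gives `u(Sₙ/n) ≤ Uₙ/n`, so `Sₙ ≤ n·u₊⁻¹(Uₙ/n)`, i.e.
`Wₙ ≤ 1` whenever `Uₙ > 0`. Hence for `z > 1` the event `{Wₙ ≥ z}` reduces to `{Uₙ = 0}`, which is
`{X₁ = ⋯ = Xₙ = 0}` because `u` vanishes only at `0`. Its probability is `P(X = 0)ⁿ` by
independence, and the normalized logarithm is then constant in `n`.
-/

section SelfNormalized

variable {ι : Type*} {u v : ℝ → ℝ}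

lemma eq_zero_of_apply_eq_zero (hu0 : u 0 = 0) (hmono : StrictMonoOn u (Ici 0))
    (hanti : StrictAntiOn u (Iic 0)) {x : ℝ} (hx : u x = 0) : x = 0 := by
  rcases lt_trichotomy x 0 with h | h | h
  · exact absurd (hanti h.le self_mem_Iic h) (by simp [hu0, hx])
  · exact h
  · exact absurd (hmono self_mem_Ici h.le h) (by simp [hu0, hx])

lemma sum_apply_eq_zero_iff (hu0 : u 0 = 0) (hnn : ∀ x, 0 ≤ u x)
    (hmono : StrictMonoOn u (Ici 0)) (hanti : StrictAntiOn u (Iic 0)) (s : Finset ι)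
    (x : ι → ℝ) : ∑ i ∈ s, u (x i) = 0 ↔ ∀ i ∈ s, x i = 0 := by
  rw [Finset.sum_eq_zero_iff_of_nonneg fun i _ => hnn (x i)]
  exact forall₂_congr fun i _ =>
    ⟨eq_zero_of_apply_eq_zero hu0 hmono hanti, fun h => h ▸ hu0⟩

lemma ConvexOn.sum_le_card_mul_inv_mean (hconv : ConvexOn ℝ univ u)
    (hmono : StrictMonoOn u (Ici 0)) (hv : ∀ y ∈ Ici (0 : ℝ), 0 ≤ v y ∧ u (v y) = y)
    {s : Finset ι} (hs : s.Nonempty) (x : ι → ℝ)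
    (hmean : 0 ≤ (∑ i ∈ s, u (x i)) / s.card) :
    ∑ i ∈ s, x i ≤ s.card * v ((∑ i ∈ s, u (x i)) / s.card) := by
  have hcard : (0 : ℝ) < s.card := by exact_mod_cast hs.card_pos
  obtain ⟨hv0, hvu⟩ := hv _ hmean
  have hjensen : u ((∑ i ∈ s, x i) / s.card) ≤ (∑ i ∈ s, u (x i)) / s.card := by
    have := hconv.map_sum_le (t := s) (w := fun _ => (s.card : ℝ)⁻¹) (p := x)
      (fun _ _ => by positivity) (by simp [hcard.ne']) (fun _ _ => mem_univ _)
    simpa only [smul_eq_mul, inv_mul_eq_div, ← Finset.sum_div] using this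
  rw [← div_le_iff₀' hcard]
  by_contra! hlt
  exact (hvu ▸ hmono hv0 (hv0.trans hlt.le) hlt).not_ge hjensen

lemma selfNormalized_ge_iff_forall_eq_zero (hconv : ConvexOn ℝ univ u) (hu0 : u 0 = 0)
    (hnn : ∀ x, 0 ≤ u x) (hmono : StrictMonoOn u (Ici 0)) (hanti : StrictAntiOn u (Iic 0))
    (hv : ∀ y ∈ Ici (0 : ℝ), 0 ≤ v y ∧ u (v y) = y) {z : ℝ} (hz : 1 < z) {s : Finset ι}
    (hs : s.Nonempty) (x : ι → ℝ) :
    (∑ i ∈ s, u (x i) = 0 ∨ 0 < ∑ i ∈ s, u (x i) ∧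
        z * (s.card * v ((∑ i ∈ s, u (x i)) / s.card)) ≤ ∑ i ∈ s, x i) ↔
      ∀ i ∈ s, x i = 0 := by
  rw [← sum_apply_eq_zero_iff hu0 hnn hmono hanti, or_iff_left_iff_imp]
  rintro ⟨hU, hzS⟩
  have hcard : (0 : ℝ) < s.card := by exact_mod_cast hs.card_pos
  have hmean : 0 < (∑ i ∈ s, u (x i)) / s.card := div_pos hU hcard
  obtain ⟨hv0, hvu⟩ := hv _ hmean.le
  have hvpos : 0 < v ((∑ i ∈ s, u (x i)) / s.card) :=
    hv0.lt_of_ne fun h => hmean.ne' (by rw [← hvu, ← h, hu0])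
  have hS := hconv.sum_le_card_mul_inv_mean hmono hv hs x hmean.le
  nlinarith [mul_pos hcard hvpos]

end SelfNormalized

lemma ProbabilityTheory.iIndepFun.measure_forall_mem_eq_pow {Ω β : Type*} [MeasurableSpace Ω]
    [MeasurableSpace β] {P : Measure Ω} {X : ℕ → Ω → β} (hindep : iIndepFun X P) (hident : ∀ i, IdentDistrib (X i) (X 0) P P)
    {B : Set β} (hB : MeasurableSet B) (n : ℕ) :
    P {ω | ∀ j < n, X j ω ∈ B} = P (X 0 ⁻¹' B) ^ n := by
  have hset : {ω | ∀ j < n, X j ω ∈ B} = ⋂ j ∈ Finset.range n, X j ⁻¹' B := by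
    ext ω; simp
  rw [hset, hindep.meas_biInter fun i _ => ⟨B, hB, rfl⟩,
    Finset.prod_congr rfl fun j _ => (hident j).measure_mem_eq hB, Finset.prod_const,
    Finset.card_range]

lemma ENNReal.inv_natCast_mul_log_pow (a : ℝ≥0∞) {n : ℕ} (hn : n ≠ 0) :
    (((n : ℝ)⁻¹ : ℝ) : EReal) * ENNReal.log (a ^ n) = ENNReal.log a := by
  rw [ENNReal.log_pow, ← EReal.coe_coe_eq_natCast, ← mul_assoc, ← EReal.coe_mul,
    inv_mul_cancel₀ (Nat.cast_ne_zero.2 hn), EReal.coe_one, one_mul]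

theorem general_self_normalized_z_gt_one_general
    {Ω : Type*} [MeasurableSpace Ω] (P : Measure Ω) [IsProbabilityMeasure P]
    (X : ℕ → Ω → ℝ)
    (hindep : iIndepFun X P)
    (hident : ∀ i, IdentDistrib (X i) (X 0) P P)
    (u : ℝ → ℝ) (hconv : ConvexOn ℝ Set.univ u) (hu0 : u 0 = 0)
    (hnn : ∀ x, 0 ≤ u x)
    (hmono : StrictMonoOn u (Set.Ici 0)) (hanti : StrictAntiOn u (Set.Iic 0))
    (v : ℝ → ℝ)
    (hvright : ∀ y ∈ Set.Ici (0 : ℝ), 0 ≤ v y ∧ u (v y) = y)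
    (z : ℝ) (hz : 1 < z) :
    (∀ n : ℕ, 1 ≤ n →
        ({ω | (∑ j ∈ Finset.range n, u (X j ω)) = 0}
            ∪ {ω | 0 < (∑ j ∈ Finset.range n, u (X j ω)) ∧
                z * ((n : ℝ) * v ((∑ j ∈ Finset.range n, u (X j ω)) / n))
                  ≤ ∑ j ∈ Finset.range n, X j ω})
          = {ω | ∀ j < n, X j ω = 0})
      ∧ (∀ n : ℕ, 1 ≤ n →
          P ({ω | (∑ j ∈ Finset.range n, u (X j ω)) = 0}
              ∪ {ω | 0 < (∑ j ∈ Finset.range n, u (X j ω)) ∧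
                  z * ((n : ℝ) * v ((∑ j ∈ Finset.range n, u (X j ω)) / n))
                    ≤ ∑ j ∈ Finset.range n, X j ω})
            = P {ω | X 0 ω = 0} ^ n)
      ∧ (∀ n : ℕ, 1 ≤ n →
          (((n : ℝ)⁻¹ : ℝ) : EReal) *
              ENNReal.log
                (P ({ω | (∑ j ∈ Finset.range n, u (X j ω)) = 0}
                    ∪ {ω | 0 < (∑ j ∈ Finset.range n, u (X j ω)) ∧
                        z * ((n : ℝ) * v ((∑ j ∈ Finset.range n, u (X j ω)) / n))
                          ≤ ∑ j ∈ Finset.range n, X j ω}))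
            = ENNReal.log (P {ω | X 0 ω = 0}))
      ∧ Tendsto
          (fun n : ℕ =>
            (((n : ℝ)⁻¹ : ℝ) : EReal) *
              ENNReal.log
                (P ({ω | (∑ j ∈ Finset.range n, u (X j ω)) = 0}
                    ∪ {ω | 0 < (∑ j ∈ Finset.range n, u (X j ω)) ∧
                        z * ((n : ℝ) * v ((∑ j ∈ Finset.range n, u (X j ω)) / n))
                          ≤ ∑ j ∈ Finset.range n, X j ω})))
          atTop (nhds (ENNReal.log (P {ω | X 0 ω = 0}))) := by
  have hevent : ∀ n : ℕ, 1 ≤ n →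
      ({ω | (∑ j ∈ Finset.range n, u (X j ω)) = 0}
          ∪ {ω | 0 < (∑ j ∈ Finset.range n, u (X j ω)) ∧
              z * ((n : ℝ) * v ((∑ j ∈ Finset.range n, u (X j ω)) / n))
                ≤ ∑ j ∈ Finset.range n, X j ω})
        = {ω | ∀ j < n, X j ω = 0} := fun n hn => by
    ext ω
    simpa using selfNormalized_ge_iff_forall_eq_zero hconv hu0 hnn hmono hanti hvright hz
      (Finset.nonempty_range_iff.2 (Nat.one_le_iff_ne_zero.1 hn)) fun j => X j ω
  have hprob := fun (n : ℕ) (hn : 1 ≤ n) => (congrArg P (hevent n hn)).trans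
    (hindep.measure_forall_mem_eq_pow hident (measurableSet_singleton 0) n)
  have hlog := fun (n : ℕ) (hn : 1 ≤ n) =>
    (congrArg (fun p => (((n : ℝ)⁻¹ : ℝ) : EReal) * ENNReal.log p) (hprob n hn)).trans
      (ENNReal.inv_natCast_mul_log_pow _ (Nat.one_le_iff_ne_zero.1 hn))
  exact ⟨hevent, hprob, hlog,
    tendsto_const_nhds.congr' (eventually_atTop.2 ⟨1, fun n hn => (hlog n hn).symm⟩)⟩

/-- **Case `z > 1` in the general self-normalized setting.** Let `u : ℝ → [0,∞)` be convex
with `u(0) = 0`, strictly increasing on `[0,∞)` and strictly decreasing on `(−∞,0]`, with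
inverse `v = u₊⁻¹` of its restriction to `[0,∞)`. For every `z > 1` and `n ≥ 1` the event
`{Wₙ ≥ z}` equals `{X₁ = ⋯ = Xₙ = 0}`; consequently `P(Wₙ ≥ z) = P(X = 0)ⁿ`,
`n⁻¹·ln P(Wₙ ≥ z) = ln P(X = 0)` for each `n ≥ 1`, and
`lim_{n→∞} n⁻¹·ln P(Wₙ ≥ z) = ln P(X = 0)`. -/
theorem general_self_normalized_z_gt_one
    {Ω : Type*} [MeasurableSpace Ω] (P : Measure Ω) [IsProbabilityMeasure P]
    (X : ℕ → Ω → ℝ) (hmeas : ∀ i, Measurable (X i))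
    (hindep : iIndepFun X P)
    (hident : ∀ i, IdentDistrib (X i) (X 0) P P)
    (u : ℝ → ℝ) (hconv : ConvexOn ℝ Set.univ u) (hu0 : u 0 = 0)
    (hnn : ∀ x, 0 ≤ u x)
    (hmono : StrictMonoOn u (Set.Ici 0)) (hanti : StrictAntiOn u (Set.Iic 0))
    (v : ℝ → ℝ)
    (hvleft : ∀ x ∈ Set.Ici (0 : ℝ), v (u x) = x)
    (hvright : ∀ y ∈ Set.Ici (0 : ℝ), 0 ≤ v y ∧ u (v y) = y)
    (z : ℝ) (hz : 1 < z) :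
    (∀ n : ℕ, 1 ≤ n →
        ({ω | (∑ j ∈ Finset.range n, u (X j ω)) = 0}
            ∪ {ω | 0 < (∑ j ∈ Finset.range n, u (X j ω)) ∧
                z * ((n : ℝ) * v ((∑ j ∈ Finset.range n, u (X j ω)) / n))
                  ≤ ∑ j ∈ Finset.range n, X j ω})
          = {ω | ∀ j < n, X j ω = 0})
      ∧ (∀ n : ℕ, 1 ≤ n →
          P ({ω | (∑ j ∈ Finset.range n, u (X j ω)) = 0}
              ∪ {ω | 0 < (∑ j ∈ Finset.range n, u (X j ω)) ∧
                  z * ((n : ℝ) * v ((∑ j ∈ Finset.range n, u (X j ω)) / n))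
                    ≤ ∑ j ∈ Finset.range n, X j ω})
            = P {ω | X 0 ω = 0} ^ n)
      ∧ (∀ n : ℕ, 1 ≤ n →
          (((n : ℝ)⁻¹ : ℝ) : EReal) *
              ENNReal.log
                (P ({ω | (∑ j ∈ Finset.range n, u (X j ω)) = 0}
                    ∪ {ω | 0 < (∑ j ∈ Finset.range n, u (X j ω)) ∧
                        z * ((n : ℝ) * v ((∑ j ∈ Finset.range n, u (X j ω)) / n))
                          ≤ ∑ j ∈ Finset.range n, X j ω}))
            = ENNReal.log (P {ω | X 0 ω = 0}))
      ∧ Tendsto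
          (fun n : ℕ =>
            (((n : ℝ)⁻¹ : ℝ) : EReal) *
              ENNReal.log
                (P ({ω | (∑ j ∈ Finset.range n, u (X j ω)) = 0}
                    ∪ {ω | 0 < (∑ j ∈ Finset.range n, u (X j ω)) ∧
                        z * ((n : ℝ) * v ((∑ j ∈ Finset.range n, u (X j ω)) / n))
                          ≤ ∑ j ∈ Finset.range n, X j ω})))
          atTop (nhds (ENNReal.log (P {ω | X 0 ω = 0}))) :=
  general_self_normalized_z_gt_one_general P X hindep hident u hconv hu0 hnn hmono hanti v hvright z
    hz
end
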